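/- arXiv:1806.08497 — 6 statements merged into one kernel-verified Lean document; each statement's English description precedes it below -/
import Mathlib

section
/- Assume Conditions 3 and 4 (with exponent p > 4), the regularity bound m(sn) ≤ c·s·m(n) for all s,n ≥ 1, and let α ∈ (0,1/2), β ∈ (0,1] satisfy (1−2α)/(1+β) ≥ 4/p. Then there exists a constant c' > 0 such that for every n₀ ∈ ℕ and every m ∈ ℕ: (a) for every k ∈ I(n₀,m), μ_{2^{n₀}}(A_k(n₀,m)) ≤ c'·2^{−k(p/2 − pα − 1)}; and (b) μ_{2^{n₀}}(B_ℓ(n₀,m)) ≤ c'·2^{−ℓ(p/2 − pα − 1)} for every 0 ≤ ℓ ≤ n₀, while μ_{2^{n₀}}(B_ℓ(n₀,m)) = 0 for ℓ > n₀. -/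
open MeasureTheory Filter Set

noncomputable section

/-- Points of the integer lattice `ℤ^d`. -/
abbrev ZLat (d : ℕ) := Fin d → ℤ

namespace AncestralPaper

/-- The canonical embedding of `ℤ^d` into Euclidean space `ℝ^d`. -/
def toE {d : ℕ} (x : ZLat d) : EuclideanSpace ℝ (Fin d) := WithLp.toLp 2 (fun i => ((x i : ℝ)))

/-- Euclidean distance between two lattice points. -/
def dE {d : ℕ} (x y : ZLat d) : ℝ := ‖toE x - toE y‖

/-- Properties (AR)(i) and (AR)(ii) of an ancestral relation, at a fixed sample point:
the reflexive description, the basic structural property, the root property,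
transitivity and interpolation. -/
structure ARProps {d : ℕ} (T : ℕ → Finset (ZLat d))
    (rel : ℕ → ZLat d → ℕ → ZLat d → Prop) : Prop where
  refl_iff : ∀ k x y, rel k y k x ↔ (x = y ∧ y ∈ T k)
  basic : ∀ k m x y, rel k y m x → k ≤ m ∧ y ∈ T k ∧ x ∈ T m
  zero_iff : ∀ m x, rel 0 0 m x ↔ x ∈ T m
  trans : ∀ k₁ k₂ k₃ y₁ y₂ y₃, k₁ < k₂ → k₂ < k₃ →
    rel k₁ y₁ k₂ y₂ → rel k₂ y₂ k₃ y₃ → rel k₁ y₁ k₃ y₃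
  interp : ∀ k₁ k₂ k₃ y₁ y₃, k₁ < k₂ → k₂ < k₃ → rel k₁ y₁ k₃ y₃ →
    ∃ y₂ ∈ T k₂, rel k₁ y₁ k₂ y₂ ∧ rel k₂ y₂ k₃ y₃

/-- The rescaled ancestral relation `(s,y) →ᵃ'ⁿ (t,x)`; the space points are recorded via
their *unscaled* lattice coordinates (the rescaled point is `y / √n`). -/
def relN {d : ℕ} (rel : ℕ → ZLat d → ℕ → ZLat d → Prop) (n : ℝ)
    (s : ℝ) (y : ZLat d) (t : ℝ) (x : ZLat d) : Prop :=
  rel ⌊n * s⌋₊ y ⌊n * t⌋₊ x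


open scoped Classical

/-- The index set `I(n₀,m) = {k ∈ ℕ : k ≤ n₀, 2^{n₀−k+1} ≤ m}`. -/
def ISet (n₀ m : ℕ) : Set ℕ := {k | k ≤ n₀ ∧ 2 ^ (n₀ - k + 1) ≤ m}

/-- The event `A_k(n₀,m)`: there exist `x ∈ T_m` and `y₁, y₂` with
`(m−2^{n₀−k+1}, y₁) →ᵃ (m−2^{n₀−k}, y₂) →ᵃ (m, x)` and `|y₂ − y₁| ≥ 2^{n₀/2}·2^{−kα}`. -/
def eventA {d : ℕ} {Ω : Type*} (T : ℕ → Ω → Finset (ZLat d))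
    (rel : Ω → ℕ → ZLat d → ℕ → ZLat d → Prop) (α : ℝ) (n₀ m k : ℕ) : Set Ω :=
  {ω | ∃ x ∈ T m ω, ∃ y₁ y₂ : ZLat d,
    rel ω (m - 2 ^ (n₀ - k + 1)) y₁ (m - 2 ^ (n₀ - k)) y₂ ∧
    rel ω (m - 2 ^ (n₀ - k)) y₂ m x ∧
    (2 : ℝ) ^ ((n₀ : ℝ) / 2) * (2 : ℝ) ^ (-(k : ℝ) * α) ≤ dE y₂ y₁}

/-- The event `B_ℓ(n₀,m)`. -/
def eventB {d : ℕ} {Ω : Type*} (T : ℕ → Ω → Finset (ZLat d))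
    (rel : Ω → ℕ → ZLat d → ℕ → ZLat d → Prop) (α : ℝ) (n₀ m ℓ : ℕ) : Set Ω :=
  if ℓ ≤ n₀ then
    (⋃ k ∈ {k : ℕ | k ∈ ISet n₀ m ∧ ℓ < k}, eventA T rel α n₀ m k) ∪
      eventA T rel α n₀ (m + 1) n₀
  else ∅

open scoped ENNReal

lemma geomIoc' (ℓ : ℕ) : ∀ n, ℓ ≤ n → ∑ k ∈ Finset.Ioc ℓ n, (1/2:ℝ)^k ≤ (1/2)^ℓ - (1/2)^n := by
  intro n
  induction n with
  | zero => intro h; interval_cases ℓ; simp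
  | succ n ih =>
    intro h
    rcases Nat.lt_or_ge ℓ (n+1) with h' | h'
    · have hln : ℓ ≤ n := Nat.lt_succ_iff.mp h'
      rw [Finset.sum_Ioc_succ_top hln]
      have := ih hln
      have hp : ((1:ℝ)/2)^n = 2 * (1/2)^(n+1) := by rw [pow_succ]; ring
      linarith
    · have : ℓ = n+1 := le_antisymm h h'
      subst this
      simp

lemma geomIoc (ℓ n : ℕ) : ∑ k ∈ Finset.Ioc ℓ n, (1/2:ℝ)^k ≤ (1/2)^ℓ := by
  rcases le_or_gt ℓ n with h | h
  · have h0 : (0:ℝ) < (1/2)^n := by positivity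
    nlinarith [geomIoc' ℓ n h]
  · rw [Finset.Ioc_eq_empty (by omega)]
    simp only [Finset.sum_empty]
    positivity

lemma condexp_step {Ω : Type*} [mΩ : MeasurableSpace Ω] (P : Measure Ω) [IsProbabilityMeasure P]
    (F : Filtration ℕ mΩ) (t : ℕ) (D S : Set Ω) (hD : MeasurableSet[F t] D)
    (hS : MeasurableSet S) (c : ℝ) (hc : 0 ≤ c)
    (hb : ∀ᵐ ω ∂P, ω ∈ D → (P[S.indicator (fun _ => (1 : ℝ)) | F t]) ω ≤ c) :
    P (D ∩ S) ≤ ENNReal.ofReal c * P D := by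
  have hDm : MeasurableSet D := F.le t D hD
  have hint : Integrable (S.indicator fun _ => (1:ℝ)) P := (integrable_const 1).indicator hS
  have h1 : (P (D ∩ S)).toReal = ∫ ω in D, (S.indicator fun _ => (1:ℝ)) ω ∂P := by
    rw [setIntegral_indicator hS]; simp; rfl
  have h2 : ∫ ω in D, (S.indicator fun _ => (1:ℝ)) ω ∂P
      = ∫ ω in D, (P[S.indicator (fun _ => (1 : ℝ)) | F t]) ω ∂P :=
    (setIntegral_condExp (F.le t) hint hD).symm
  have h3 : ∫ ω in D, (P[S.indicator (fun _ => (1 : ℝ)) | F t]) ω ∂P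
      ≤ ∫ _ω in D, c ∂P := by
    refine setIntegral_mono_ae_restrict integrable_condExp.integrableOn
      (integrable_const c).integrableOn ?_
    exact (ae_restrict_iff' hDm).2 hb
  have h4 : ∫ _ω in D, c ∂P = (P D).toReal * c := by
    rw [setIntegral_const]; simp [smul_eq_mul]; exact Or.inl rfl
  have hfin : (P (D ∩ S)).toReal ≤ c * (P D).toReal := by
    rw [h1, h2] at *
    calc _ ≤ ∫ _ω in D, c ∂P := h3
    _ = (P D).toReal * c := h4
    _ = c * (P D).toReal := mul_comm _ _
  calc P (D ∩ S) = ENNReal.ofReal ((P (D ∩ S)).toReal) :=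
        (ENNReal.ofReal_toReal (measure_ne_top P _)).symm
    _ ≤ ENNReal.ofReal (c * (P D).toReal) := ENNReal.ofReal_le_ofReal hfin
    _ = ENNReal.ofReal c * ENNReal.ofReal ((P D).toReal) := ENNReal.ofReal_mul hc
    _ = ENNReal.ofReal c * P D := by rw [ENNReal.ofReal_toReal (measure_ne_top P _)]

lemma keyA_bound {d : ℕ}
    {Ω : Type*} [mΩ : MeasurableSpace Ω] (P : Measure Ω) [IsProbabilityMeasure P]
    (F : Filtration ℕ mΩ)
    (T : ℕ → Ω → Finset (ZLat d)) (rel : Ω → ℕ → ZLat d → ℕ → ZLat d → Prop)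
    (hadapted : ∀ k x, MeasurableSet[F k] {ω | x ∈ T k ω})
    (hrelmeas : ∀ k m x y, MeasurableSet[F m] {ω | rel ω k y m x})
    (hAR : ∀ᵐ ω ∂P, ARProps (fun k => T k ω) (rel ω))
    (mf : ℝ → ℝ) (hmf_pos : ∀ t : ℝ, 0 ≤ t → 0 < mf t)
    (c₃ : ℝ) (hc₃ : 0 < c₃)
    (hcond3 : ∀ k j : ℕ, 1 ≤ j → ∀ y : ZLat d, ∀ᵐ ω ∂P, y ∈ T k ω →
      (P[Set.indicator {ω' | ∃ z, rel ω' k y (k + j) z} (fun _ => (1 : ℝ)) | F k]) ω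
        ≤ c₃ / mf j)
    (p : ℝ) (hp : 0 < p) (c₄ : ℝ) (hc₄ : 0 < c₄)
    (hcond4 : ∀ k j : ℕ, 0 < j → j ≤ k →
      ∫⁻ ω, (∑ x ∈ T k ω, ∑ y ∈ T (k - j) ω,
          if rel ω (k - j) y k x then ENNReal.ofReal (dE x y ^ p) else 0) ∂P
        ≤ ENNReal.ofReal (c₄ * (j : ℝ) ^ (p / 2)))
    (α : ℝ) (n₀ m k : ℕ) (hkn : k ≤ n₀) (hpm : 2 ^ (n₀ - k + 1) ≤ m) :
    (P (eventA T rel α n₀ m k)).toReal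
      ≤ c₃ / mf ((2 ^ (n₀ - k) : ℕ) : ℝ) *
        ((c₄ * ((2 ^ (n₀ - k) : ℕ) : ℝ) ^ (p / 2)) /
          ((2 : ℝ) ^ ((n₀ : ℝ) / 2) * (2 : ℝ) ^ (-(k : ℝ) * α)) ^ p) := by
  set j : ℕ := 2 ^ (n₀ - k) with hj
  have hj1 : 1 ≤ j := Nat.one_le_two_pow
  have h2j : 2 ^ (n₀ - k + 1) = 2 * j := by rw [pow_succ]; ring
  have h2jm : 2 * j ≤ m := h2j ▸ hpm
  set t : ℕ := m - j with ht
  have hjt : j ≤ t := by omega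
  have htj : t + j = m := by omega
  have hts : t - j = m - 2 ^ (n₀ - k + 1) := by omega
  set r : ℝ := (2 : ℝ) ^ ((n₀ : ℝ) / 2) * (2 : ℝ) ^ (-(k : ℝ) * α) with hrdef
  have hr : 0 < r := by positivity
  have hrp : 0 < r ^ p := Real.rpow_pos_of_pos hr p
  have hmfj : 0 < mf ((j : ℕ) : ℝ) := hmf_pos _ (by positivity)
  -- the sets
  set D : ZLat d → Set Ω := fun y₂ =>
    {ω | y₂ ∈ T t ω ∧ ∃ y₁, rel ω (t - j) y₁ t y₂ ∧ r ≤ dE y₂ y₁} with hD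
  set S : ZLat d → Set Ω := fun y₂ => {ω' | ∃ z, rel ω' t y₂ (t + j) z} with hS
  have hDmeas : ∀ y₂, MeasurableSet[F t] (D y₂) := by
    intro y₂
    have : D y₂ = {ω | y₂ ∈ T t ω} ∩
        ⋃ y₁ : ZLat d, ({ω | rel ω (t - j) y₁ t y₂} ∩ {_ω : Ω | r ≤ dE y₂ y₁}) := by
      ext ω
      simp only [hD, Set.mem_setOf_eq, Set.mem_inter_iff, Set.mem_iUnion]
    rw [this]
    exact (hadapted t y₂).inter (MeasurableSet.iUnion fun y₁ =>
      (hrelmeas (t - j) t y₂ y₁).inter (MeasurableSet.const _))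
  have hSmeas : ∀ y₂, MeasurableSet (S y₂) := by
    intro y₂
    have : S y₂ = ⋃ z : ZLat d, {ω' | rel ω' t y₂ (t + j) z} := by
      ext ω; simp only [hS, Set.mem_setOf_eq, Set.mem_iUnion]
    rw [this]
    exact MeasurableSet.iUnion fun z => F.le (t + j) _ (hrelmeas t (t + j) z y₂)
  -- covering
  have hcover : eventA T rel α n₀ m k ≤ᵐ[P] ⋃ y₂, (D y₂ ∩ S y₂) := by
    filter_upwards [hAR] with ω hARω hmem
    obtain ⟨x, hx, y₁, y₂, h1, h2, hdist⟩ := hmem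
    have hmt : m - 2 ^ (n₀ - k) = t := rfl
    rw [hmt] at h1 h2
    rw [← hts] at h1
    refine Set.mem_iUnion.2 ⟨y₂, ⟨(hARω.basic _ _ _ _ h2).2.1, y₁, h1, hdist⟩, ⟨x, ?_⟩⟩
    rw [htj]; exact h2
  -- step 2 : condexp bound
  have hstep2 : ∀ y₂, P (D y₂ ∩ S y₂) ≤ ENNReal.ofReal (c₃ / mf ((j : ℕ) : ℝ)) * P (D y₂) := by
    intro y₂
    refine condexp_step P F t (D y₂) (S y₂) (hDmeas y₂) (hSmeas y₂) _
      (by positivity) ?_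
    filter_upwards [hcond3 t j hj1 y₂] with ω hω hDω
    exact hω hDω.1
  -- step 3: counting bound
  have hstep3 : ∑' y₂ : ZLat d, P (D y₂)
      ≤ (ENNReal.ofReal (r ^ p))⁻¹ * ENNReal.ofReal (c₄ * ((j : ℕ) : ℝ) ^ (p / 2)) := by
    have hind : ∀ y₂ : ZLat d, P (D y₂) = ∫⁻ ω, (D y₂).indicator (fun _ => (1 : ℝ≥0∞)) ω ∂P := by
      intro y₂
      exact (lintegral_indicator_one (F.le t _ (hDmeas y₂))).symm
    calc ∑' y₂ : ZLat d, P (D y₂)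
        = ∫⁻ ω, ∑' y₂ : ZLat d, (D y₂).indicator (fun _ => (1 : ℝ≥0∞)) ω ∂P := by
          rw [lintegral_tsum fun y₂ =>
            (measurable_const.indicator (F.le t _ (hDmeas y₂))).aemeasurable]
          simp_rw [hind]
      _ ≤ ∫⁻ ω, (ENNReal.ofReal (r ^ p))⁻¹ *
            (∑ x ∈ T t ω, ∑ y ∈ T (t - j) ω,
              if rel ω (t - j) y t x then ENNReal.ofReal (dE x y ^ p) else 0) ∂P := by
          refine lintegral_mono_ae ?_
          filter_upwards [hAR] with ω hARω
          have hout : ∀ y₂ : ZLat d, y₂ ∉ T t ω →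
              (D y₂).indicator (fun _ => (1 : ℝ≥0∞)) ω = 0 := by
            intro y₂ hy₂
            apply Set.indicator_of_notMem
            intro hmem; exact hy₂ hmem.1
          rw [tsum_eq_sum (s := T t ω) fun y₂ hy₂ => hout y₂ hy₂]
          rw [Finset.mul_sum]
          refine Finset.sum_le_sum ?_
          intro y₂ hy₂
          by_cases hDω : ω ∈ D y₂
          · rw [Set.indicator_of_mem hDω]
            obtain ⟨_, y₁, hrel, hdist⟩ := hDω
            have hy₁ : y₁ ∈ T (t - j) ω := (hARω.basic _ _ _ _ hrel).2.1
            have hsingle : ENNReal.ofReal (r ^ p) ≤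
                ∑ y ∈ T (t - j) ω, if rel ω (t - j) y t y₂ then
                  ENNReal.ofReal (dE y₂ y ^ p) else 0 := by
              have : ENNReal.ofReal (r ^ p) ≤
                  (if rel ω (t - j) y₁ t y₂ then ENNReal.ofReal (dE y₂ y₁ ^ p) else 0) := by
                rw [if_pos hrel]
                exact ENNReal.ofReal_le_ofReal
                  (Real.rpow_le_rpow hr.le hdist hp.le)
              exact this.trans (Finset.single_le_sum
                (f := fun y => if rel ω (t - j) y t y₂ then ENNReal.ofReal (dE y₂ y ^ p) else 0)
                (fun _ _ => zero_le) hy₁)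
            calc (1 : ℝ≥0∞) = (ENNReal.ofReal (r ^ p))⁻¹ * ENNReal.ofReal (r ^ p) := by
                  rw [ENNReal.inv_mul_cancel (by simp [hrp]) ENNReal.ofReal_ne_top]
              _ ≤ _ := mul_le_mul_right hsingle _
          · rw [Set.indicator_of_notMem hDω]; exact zero_le
      _ = (ENNReal.ofReal (r ^ p))⁻¹ * ∫⁻ ω, (∑ x ∈ T t ω, ∑ y ∈ T (t - j) ω,
              if rel ω (t - j) y t x then ENNReal.ofReal (dE x y ^ p) else 0) ∂P :=
          lintegral_const_mul' _ _ (by simp [hrp])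
      _ ≤ (ENNReal.ofReal (r ^ p))⁻¹ * ENNReal.ofReal (c₄ * ((j : ℕ) : ℝ) ^ (p / 2)) :=
          mul_le_mul_right (hcond4 t j (by omega) hjt) _
  -- assemble
  have hfinal : P (eventA T rel α n₀ m k) ≤
      ENNReal.ofReal (c₃ / mf ((j : ℕ) : ℝ)) *
        ((ENNReal.ofReal (r ^ p))⁻¹ * ENNReal.ofReal (c₄ * ((j : ℕ) : ℝ) ^ (p / 2))) := by
    calc P (eventA T rel α n₀ m k) ≤ P (⋃ y₂, (D y₂ ∩ S y₂)) := measure_mono_ae hcover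
      _ ≤ ∑' y₂ : ZLat d, P (D y₂ ∩ S y₂) := measure_iUnion_le _
      _ ≤ ∑' y₂ : ZLat d, ENNReal.ofReal (c₃ / mf ((j : ℕ) : ℝ)) * P (D y₂) :=
          ENNReal.tsum_le_tsum hstep2
      _ = ENNReal.ofReal (c₃ / mf ((j : ℕ) : ℝ)) * ∑' y₂ : ZLat d, P (D y₂) :=
          ENNReal.tsum_mul_left
      _ ≤ _ := mul_le_mul_right hstep3 _
  refine ENNReal.toReal_le_of_le_ofReal (by positivity) ?_
  calc P (eventA T rel α n₀ m k) ≤ _ := hfinal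
    _ = ENNReal.ofReal (c₃ / mf ((j : ℕ) : ℝ) *
        ((c₄ * ((j : ℕ) : ℝ) ^ (p / 2)) / r ^ p)) := by
      rw [← ENNReal.ofReal_inv_of_pos hrp, ← ENNReal.ofReal_mul (by positivity),
        ← ENNReal.ofReal_mul (by positivity)]
      congr 1
      field_simp

/-- Lemma `dmoduli1`: under Conditions 3 and 4 and the regularity bound on
`m`, the unconditioned measures of the events `A_k(n₀,m)` and `B_ℓ(n₀,m)` decay
geometrically. -/
theorem statement3 {d : ℕ} (hd : 1 ≤ d)
    {Ω : Type*} [mΩ : MeasurableSpace Ω] (P : Measure Ω) [IsProbabilityMeasure P]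
    (F : Filtration ℕ mΩ)
    (T : ℕ → Ω → Finset (ZLat d)) (rel : Ω → ℕ → ZLat d → ℕ → ZLat d → Prop)
    (hT0 : ∀ᵐ ω ∂P, T 0 ω = {(0 : ZLat d)})
    (hadapted : ∀ k x, MeasurableSet[F k] {ω | x ∈ T k ω})
    (hrelmeas : ∀ k m x y, MeasurableSet[F m] {ω | rel ω k y m x})
    (hAR : ∀ᵐ ω ∂P, ARProps (fun k => T k ω) (rel ω))
    -- the function `m` of Condition 1 and its regularity bound
    (mf : ℝ → ℝ) (hmf_pos : ∀ t : ℝ, 0 ≤ t → 0 < mf t)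
    (hmf_mono : MonotoneOn mf (Set.Ici 0))
    (c₁ : ℝ) (hc₁ : 1 ≤ c₁)
    (hmf_reg : ∀ s n : ℝ, 1 ≤ s → 1 ≤ n → mf (s * n) ≤ c₁ * s * mf n)
    -- Condition 3
    (c₃ : ℝ) (hc₃ : 0 < c₃)
    (hcond3 : ∀ k j : ℕ, 1 ≤ j → ∀ y : ZLat d, ∀ᵐ ω ∂P, y ∈ T k ω →
      (P[Set.indicator {ω' | ∃ z, rel ω' k y (k + j) z} (fun _ => (1 : ℝ)) | F k]) ω
        ≤ c₃ / mf j)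
    -- Condition 4 with exponent `p > 4`
    (p : ℝ) (hp : 4 < p) (c₄ : ℝ) (hc₄ : 0 < c₄)
    (hcond4 : ∀ k j : ℕ, 0 < j → j ≤ k →
      ∫⁻ ω, (∑ x ∈ T k ω, ∑ y ∈ T (k - j) ω,
          if rel ω (k - j) y k x then ENNReal.ofReal (dE x y ^ p) else 0) ∂P
        ≤ ENNReal.ofReal (c₄ * (j : ℝ) ^ (p / 2)))
    -- exponents
    (α β : ℝ) (hα : α ∈ Set.Ioo (0 : ℝ) (1 / 2)) (hβ : β ∈ Set.Ioc (0 : ℝ) 1)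
    (hαβ : 4 / p ≤ (1 - 2 * α) / (1 + β)) :
    ∃ c' : ℝ, 0 < c' ∧ ∀ n₀ m : ℕ, 1 ≤ m →
      (∀ k ∈ ISet n₀ m,
        mf ((2 : ℝ) ^ n₀) * (P (eventA T rel α n₀ m k)).toReal
          ≤ c' * (2 : ℝ) ^ (-(k : ℝ) * (p / 2 - p * α - 1))) ∧
      (∀ ℓ : ℕ, ℓ ≤ n₀ →
        mf ((2 : ℝ) ^ n₀) * (P (eventB T rel α n₀ m ℓ)).toReal
          ≤ c' * (2 : ℝ) ^ (-(ℓ : ℝ) * (p / 2 - p * α - 1))) ∧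
      (∀ ℓ : ℕ, n₀ < ℓ →
        mf ((2 : ℝ) ^ n₀) * (P (eventB T rel α n₀ m ℓ)).toReal = 0) := by
  have hp0 : (0:ℝ) < p := by linarith
  set γ : ℝ := p / 2 - p * α - 1 with hγdef
  have hγ1 : 1 ≤ γ := by
    have h1 : (0:ℝ) ≤ 1 - 2 * α := by nlinarith [hα.2]
    have h2 : (1:ℝ) ≤ 1 + β := by nlinarith [hβ.1]
    have h3 : (1 - 2 * α) / (1 + β) ≤ 1 - 2 * α := div_le_self h1 h2
    have h4 : 4 / p ≤ 1 - 2 * α := le_trans hαβ h3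
    have h5 : (4:ℝ) ≤ p * (1 - 2 * α) := by
      rw [div_le_iff₀ hp0] at h4; nlinarith
    rw [hγdef]; nlinarith
  have hγ0 : 0 < γ := by linarith
  set cA : ℝ := c₁ * c₃ * c₄ with hcA
  have hcA0 : 0 < cA := by positivity
  refine ⟨2 * cA, by positivity, ?_⟩
  intro n₀ m hm1
  -- uniform bound on A events
  have keyA' : ∀ m k : ℕ, k ≤ n₀ → 2 ^ (n₀ - k + 1) ≤ m →
      mf ((2 : ℝ) ^ n₀) * (P (eventA T rel α n₀ m k)).toReal
        ≤ cA * (2 : ℝ) ^ (-(k : ℝ) * γ) := by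
    intro m k hkn hpm
    have hb := keyA_bound P F T rel hadapted hrelmeas hAR mf hmf_pos c₃ hc₃ hcond3
      p hp0 c₄ hc₄ hcond4 α n₀ m k hkn hpm
    push_cast at hb
    set X : ℝ := (2:ℝ) ^ (n₀ - k) with hXdef
    have hX1 : (1:ℝ) ≤ X := one_le_pow₀ one_le_two
    have hX0 : (0:ℝ) < X := by linarith
    set r : ℝ := (2 : ℝ) ^ ((n₀ : ℝ) / 2) * (2 : ℝ) ^ (-(k : ℝ) * α) with hrdef
    have hr : 0 < r := by positivity
    have hrp : 0 < r ^ p := Real.rpow_pos_of_pos hr p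
    have hmfX : 0 < mf X := hmf_pos X hX0.le
    have hmfb : mf ((2:ℝ) ^ n₀) ≤ c₁ * (2:ℝ) ^ k * mf X := by
      have he : (2:ℝ) ^ n₀ = (2:ℝ) ^ k * X := by
        rw [hXdef, ← pow_add]; congr 1; omega
      rw [he]
      exact hmf_reg _ _ (one_le_pow₀ one_le_two) hX1
    have hPnn : 0 ≤ (P (eventA T rel α n₀ m k)).toReal := ENNReal.toReal_nonneg
    have hmf0 : 0 ≤ mf ((2:ℝ) ^ n₀) := (hmf_pos _ (by positivity)).le
    have hchain : mf ((2 : ℝ) ^ n₀) * (P (eventA T rel α n₀ m k)).toReal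
        ≤ (c₁ * (2:ℝ) ^ k * mf X) * (c₃ / mf X * (c₄ * X ^ (p/2) / r ^ p)) := by
      calc mf ((2 : ℝ) ^ n₀) * (P (eventA T rel α n₀ m k)).toReal
          ≤ mf ((2 : ℝ) ^ n₀) * (c₃ / mf X * (c₄ * X ^ (p/2) / r ^ p)) :=
            mul_le_mul_of_nonneg_left hb hmf0
        _ ≤ _ := mul_le_mul_of_nonneg_right hmfb (by positivity)
    refine hchain.trans (le_of_eq ?_)
    have hXrw : X = (2:ℝ) ^ ((n₀:ℝ) - (k:ℝ)) := by
      rw [hXdef, ← Real.rpow_natCast 2 (n₀ - k)]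
      congr 1
      rw [Nat.cast_sub hkn]
    have e1 : (c₁ * (2:ℝ) ^ k * mf X) * (c₃ / mf X * (c₄ * X ^ (p/2) / r ^ p))
        = cA * ((2:ℝ) ^ k * X ^ (p/2) / r ^ p) := by
      field_simp
      ring
    rw [e1]
    congr 1
    have e2 : X ^ (p/2) = (2:ℝ) ^ (((n₀:ℝ) - (k:ℝ)) * (p/2)) := by
      rw [hXrw, ← Real.rpow_mul (by norm_num : (0:ℝ) ≤ 2)]
    have e3 : r ^ p = (2:ℝ) ^ (((n₀:ℝ)/2 + -(k:ℝ) * α) * p) := by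
      rw [hrdef, ← Real.rpow_add (by norm_num : (0:ℝ) < 2),
        ← Real.rpow_mul (by norm_num : (0:ℝ) ≤ 2)]
    rw [e2, e3, ← Real.rpow_natCast (2:ℝ) k, ← Real.rpow_add (by norm_num : (0:ℝ) < 2),
      ← Real.rpow_sub (by norm_num : (0:ℝ) < 2)]
    congr 1
    rw [hγdef]
    ring
  refine ⟨?_, ?_, ?_⟩
  · -- part (a)
    intro k hk
    refine (keyA' m k hk.1 hk.2).trans ?_
    have : (0:ℝ) < (2:ℝ) ^ (-(k : ℝ) * γ) := Real.rpow_pos_of_pos two_pos _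
    nlinarith
  · -- part (b)
    intro ℓ hℓ
    have hBrw : eventB T rel α n₀ m ℓ =
        (⋃ k ∈ {k : ℕ | k ∈ ISet n₀ m ∧ ℓ < k}, eventA T rel α n₀ m k) ∪
          eventA T rel α n₀ (m + 1) n₀ := by
      rw [eventB, if_pos hℓ]
    set U := ⋃ k ∈ {k : ℕ | k ∈ ISet n₀ m ∧ ℓ < k}, eventA T rel α n₀ m k with hU
    set A' := eventA T rel α n₀ (m + 1) n₀ with hA'
    set C : ℕ → Set Ω := fun k => if k ∈ ISet n₀ m then eventA T rel α n₀ m k else ∅ with hC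
    have hUsub : U ⊆ ⋃ k ∈ (Finset.Ioc ℓ n₀ : Finset ℕ), C k := by
      intro ω hω
      rw [Set.mem_iUnion₂] at hω
      obtain ⟨k, ⟨hkI, hlk⟩, hmem⟩ := hω
      refine Set.mem_iUnion₂.2 ⟨k, ?_, ?_⟩
      · exact Finset.mem_Ioc.2 ⟨hlk, hkI.1⟩
      · rw [hC]; simp only [if_pos hkI]; exact hmem
    have hPU : P U ≤ ∑ k ∈ Finset.Ioc ℓ n₀, P (C k) :=
      (measure_mono hUsub).trans (measure_biUnion_finset_le _ _)
    have hPUr : (P U).toReal ≤ ∑ k ∈ Finset.Ioc ℓ n₀, (P (C k)).toReal := by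
      rw [← ENNReal.toReal_sum (fun i _ => measure_ne_top P _)]
      exact ENNReal.toReal_mono (by
        exact (ENNReal.sum_lt_top.2 fun i _ => (measure_lt_top P _)).ne) hPU
    have hPB : (P (eventB T rel α n₀ m ℓ)).toReal ≤ (P U).toReal + (P A').toReal := by
      rw [hBrw, ← ENNReal.toReal_add (measure_ne_top P _) (measure_ne_top P _)]
      exact ENNReal.toReal_mono (by
        exact (ENNReal.add_lt_top.2 ⟨measure_lt_top P _, measure_lt_top P _⟩).ne)
        (measure_union_le _ _)
    have hmf0 : 0 ≤ mf ((2:ℝ) ^ n₀) := (hmf_pos _ (by positivity)).le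
    -- bound the sum
    have hterm : ∀ k ∈ Finset.Ioc ℓ n₀,
        mf ((2:ℝ) ^ n₀) * (P (C k)).toReal
          ≤ cA * ((2:ℝ) ^ (-(ℓ:ℝ) * (γ - 1)) * ((1:ℝ)/2) ^ k) := by
      intro k hkmem
      obtain ⟨hlk, hkn⟩ := Finset.mem_Ioc.1 hkmem
      have hhalf : ((1:ℝ)/2) ^ k = (2:ℝ) ^ (-(k:ℝ)) := by
        rw [Real.rpow_neg (by norm_num), Real.rpow_natCast]
        simp [one_div, inv_pow]
      have hexp : (2:ℝ) ^ (-(k:ℝ) * γ) ≤ (2:ℝ) ^ (-(ℓ:ℝ) * (γ - 1)) * ((1:ℝ)/2) ^ k := by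
        rw [hhalf, ← Real.rpow_add (by norm_num : (0:ℝ) < 2)]
        refine Real.rpow_le_rpow_of_exponent_le one_le_two ?_
        have hlkR : (ℓ:ℝ) ≤ (k:ℝ) := by exact_mod_cast hlk.le
        nlinarith
      by_cases hkI : k ∈ ISet n₀ m
      · have : C k = eventA T rel α n₀ m k := by rw [hC]; simp only [if_pos hkI]
        rw [this]
        refine (keyA' m k hkI.1 hkI.2).trans ?_
        exact mul_le_mul_of_nonneg_left hexp hcA0.le
      · have : C k = ∅ := by rw [hC]; simp only [if_neg hkI]
        rw [this]
        simp only [measure_empty, ENNReal.toReal_zero, mul_zero]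
        positivity
    have hsum : ∑ k ∈ Finset.Ioc ℓ n₀, mf ((2:ℝ) ^ n₀) * (P (C k)).toReal
        ≤ cA * (2:ℝ) ^ (-(ℓ:ℝ) * γ) := by
      calc ∑ k ∈ Finset.Ioc ℓ n₀, mf ((2:ℝ) ^ n₀) * (P (C k)).toReal
          ≤ ∑ k ∈ Finset.Ioc ℓ n₀, cA * ((2:ℝ) ^ (-(ℓ:ℝ) * (γ - 1)) * ((1:ℝ)/2) ^ k) :=
            Finset.sum_le_sum hterm
        _ = cA * (2:ℝ) ^ (-(ℓ:ℝ) * (γ - 1)) * ∑ k ∈ Finset.Ioc ℓ n₀, ((1:ℝ)/2) ^ k := by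
            rw [Finset.mul_sum]; refine Finset.sum_congr rfl fun k _ => by ring
        _ ≤ cA * (2:ℝ) ^ (-(ℓ:ℝ) * (γ - 1)) * ((1:ℝ)/2) ^ ℓ := by
            refine mul_le_mul_of_nonneg_left (geomIoc ℓ n₀) (by positivity)
        _ = cA * (2:ℝ) ^ (-(ℓ:ℝ) * γ) := by
            have hhalf : ((1:ℝ)/2) ^ ℓ = (2:ℝ) ^ (-(ℓ:ℝ)) := by
              rw [Real.rpow_neg (by norm_num), Real.rpow_natCast]
              simp [one_div, inv_pow]
            rw [hhalf, mul_assoc, ← Real.rpow_add (by norm_num : (0:ℝ) < 2)]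
            congr 1
            ring
    -- bound the A' term
    have hA'bd : mf ((2:ℝ) ^ n₀) * (P A').toReal ≤ cA * (2:ℝ) ^ (-(ℓ:ℝ) * γ) := by
      have h1 : 2 ^ (n₀ - n₀ + 1) ≤ m + 1 := by simp; omega
      refine (keyA' (m+1) n₀ le_rfl h1).trans ?_
      refine mul_le_mul_of_nonneg_left ?_ hcA0.le
      refine Real.rpow_le_rpow_of_exponent_le one_le_two ?_
      have : (ℓ:ℝ) ≤ (n₀:ℝ) := by exact_mod_cast hℓ
      nlinarith
    calc mf ((2:ℝ) ^ n₀) * (P (eventB T rel α n₀ m ℓ)).toReal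
        ≤ mf ((2:ℝ) ^ n₀) * ((P U).toReal + (P A').toReal) :=
          mul_le_mul_of_nonneg_left hPB hmf0
      _ = mf ((2:ℝ) ^ n₀) * (P U).toReal + mf ((2:ℝ) ^ n₀) * (P A').toReal := by ring
      _ ≤ (∑ k ∈ Finset.Ioc ℓ n₀, mf ((2:ℝ) ^ n₀) * (P (C k)).toReal)
            + mf ((2:ℝ) ^ n₀) * (P A').toReal := by
          rw [← Finset.mul_sum]
          exact add_le_add_left (mul_le_mul_of_nonneg_left hPUr hmf0) _
      _ ≤ cA * (2:ℝ) ^ (-(ℓ:ℝ) * γ) + cA * (2:ℝ) ^ (-(ℓ:ℝ) * γ) := add_le_add hsum hA'bd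
      _ = 2 * cA * (2:ℝ) ^ (-(ℓ:ℝ) * γ) := by ring
  · -- part (c)
    intro ℓ hℓ
    rw [eventB, if_neg (by omega)]
    simp


end AncestralPaper
end
end

section
/- Let α ∈ (0,1/2). There is a constant c = c(α) > 0 such that, almost surely, for every n₀ ∈ ℕ, every m ∈ ℕ and every ℓ ∈ {0,…,n₀} with 2^{n₀−ℓ} ≤ m: on the complement of the event B_ℓ(n₀,m), whenever (m−2^{n₀−ℓ}, y) →ᵃ (m, x') →ᵃ (m+1, x) for some x ∈ T_{m+1}, it holds that |x' − y| ≤ c·2^{(n₀/2) − ℓα}. -/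
open MeasureTheory Filter Set

noncomputable section

namespace AncestralPaper

open scoped Classical

lemma dE_self {d : ℕ} (x : ZLat d) : dE x x = 0 := by simp [dE]

lemma dE_triangle {d : ℕ} (x y z : ZLat d) : dE x z ≤ dE x y + dE y z := by
  have := dist_triangle (toE x) (toE y) (toE z)
  simpa [dE, dist_eq_norm] using this

/-- Geometric sum bound. -/
lemma geom_aux {r : ℝ} (h0 : 0 < r) (h1 : r < 1) (ℓ n₀ : ℕ) (h : ℓ ≤ n₀) :
    r ^ n₀ + ∑ k ∈ Finset.Ioc ℓ n₀, r ^ k ≤ r ^ ℓ * (1 - r)⁻¹ := by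
  have hr : 0 < 1 - r := by linarith
  have hinv : 1 ≤ (1 - r)⁻¹ := by
    rw [le_inv_comm₀ one_pos hr]; linarith
  have key : ∀ n, ℓ ≤ n →
      (∑ k ∈ Finset.Ioc ℓ n, r ^ k) + r ^ n * (1 - r)⁻¹ ≤ r ^ ℓ * (1 - r)⁻¹ := by
    intro n hn
    induction n, hn using Nat.le_induction with
    | base => simp
    | succ n hn ih =>
      rw [Finset.sum_Ioc_succ_top hn]
      have hrn : 0 < r ^ n := pow_pos h0 n
      have hstep : r ^ (n + 1) + r ^ (n + 1) * (1 - r)⁻¹ ≤ r ^ n * (1 - r)⁻¹ := by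
        rw [pow_succ]
        rw [← sub_nonneg]
        have : r ^ n * (1 - r)⁻¹ - (r ^ n * r + r ^ n * r * (1 - r)⁻¹)
            = r ^ n * (1 - r)⁻¹ * (1 - r * (1 - r) - r) := by
          field_simp; ring
        rw [this]
        have h2 : 0 ≤ 1 - r * (1 - r) - r := by nlinarith
        positivity
      linarith
  have hk := key n₀ h
  have hlast : r ^ n₀ ≤ r ^ n₀ * (1 - r)⁻¹ := by
    nlinarith [pow_pos h0 n₀]
  linarith

/-- Lemma `dmoduli2`: for `α ∈ (0,1/2)` there is a constant `c = c(α) > 0`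
such that almost surely, for all `n₀, m, ℓ` with `ℓ ≤ n₀` and `2^{n₀−ℓ} ≤ m`, on the
complement of `B_ℓ(n₀,m)`, whenever `(m−2^{n₀−ℓ}, y) →ᵃ (m, x') →ᵃ (m+1, x)` for some
`x ∈ T_{m+1}`, one has `|x' − y| ≤ c·2^{(n₀/2) − ℓα}`. -/
theorem statement4 {d : ℕ} (hd : 1 ≤ d)
    {Ω : Type*} [mΩ : MeasurableSpace Ω] (P : Measure Ω) [IsProbabilityMeasure P]
    (F : Filtration ℕ mΩ)
    (T : ℕ → Ω → Finset (ZLat d)) (rel : Ω → ℕ → ZLat d → ℕ → ZLat d → Prop)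
    (hT0 : ∀ᵐ ω ∂P, T 0 ω = {(0 : ZLat d)})
    (hadapted : ∀ k x, MeasurableSet[F k] {ω | x ∈ T k ω})
    (hrelmeas : ∀ k m x y, MeasurableSet[F m] {ω | rel ω k y m x})
    (hAR : ∀ᵐ ω ∂P, ARProps (fun k => T k ω) (rel ω))
    (α : ℝ) (hα : α ∈ Set.Ioo (0 : ℝ) (1 / 2)) :
    ∃ c : ℝ, 0 < c ∧ ∀ᵐ ω ∂P, ∀ n₀ m ℓ : ℕ, ℓ ≤ n₀ → 2 ^ (n₀ - ℓ) ≤ m →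
      ω ∉ eventB T rel α n₀ m ℓ →
      ∀ x x' y : ZLat d, x ∈ T (m + 1) ω →
        rel ω (m - 2 ^ (n₀ - ℓ)) y m x' → rel ω m x' (m + 1) x →
        dE x' y ≤ c * (2 : ℝ) ^ ((n₀ : ℝ) / 2 - (ℓ : ℝ) * α) := by
  obtain ⟨hα0, hα12⟩ := hα
  set r : ℝ := (2 : ℝ) ^ (-α) with hr_def
  have hr0 : 0 < r := Real.rpow_pos_of_pos (by norm_num) _
  have hr1 : r < 1 :=
    Real.rpow_lt_one_of_one_lt_of_neg (by norm_num) (by linarith)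
  have hrpow : ∀ k : ℕ, (2 : ℝ) ^ (-(k : ℝ) * α) = r ^ k := by
    intro k
    rw [hr_def, ← Real.rpow_natCast ((2:ℝ) ^ (-α)) k, ← Real.rpow_mul (by norm_num)]
    ring_nf
  refine ⟨(1 - r)⁻¹, inv_pos.mpr (by linarith), ?_⟩
  filter_upwards [hAR] with ω hARω
  intro n₀ m ℓ hℓn hm hB x x' y hxT hrel1 hrel2
  -- basic facts
  have hone : (1 : ℕ) ≤ 2 ^ (n₀ - ℓ) := Nat.one_le_two_pow
  have hm1 : 1 ≤ m := le_trans hone hm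
  have hx'T : x' ∈ T m ω := (hARω.basic m (m + 1) x x' hrel2).2.1
  -- unpack ¬ B
  rw [eventB, if_pos hℓn] at hB
  have hB1 : ∀ k, k ∈ ISet n₀ m → ℓ < k → ω ∉ eventA T rel α n₀ m k := by
    intro k hk hlk h
    exact hB (Or.inl (Set.mem_biUnion ⟨hk, hlk⟩ h))
  have hB2 : ω ∉ eventA T rel α n₀ (m + 1) n₀ := fun h => hB (Or.inr h)
  -- the chaining claim
  have key : ∀ j, ℓ ≤ j → j ≤ n₀ →
      ∃ z : ZLat d, rel ω (m - 2 ^ (n₀ - j)) z m x' ∧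
        dE z y ≤ (2 : ℝ) ^ ((n₀ : ℝ) / 2) * ∑ k ∈ Finset.Ioc ℓ j, r ^ k := by
    intro j hj
    induction j, hj using Nat.le_induction with
    | base =>
      intro _
      exact ⟨y, hrel1, by simp [dE_self]⟩
    | succ j hj ih =>
      intro hjn
      obtain ⟨z, hz, hzd⟩ := ih (by omega)
      have hpa : (2 : ℕ) ^ (n₀ - (j + 1)) < 2 ^ (n₀ - j) :=
        Nat.pow_lt_pow_right (by norm_num) (by omega)
      have hpb : (2 : ℕ) ^ (n₀ - j) ≤ 2 ^ (n₀ - ℓ) :=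
        Nat.pow_le_pow_right (by norm_num) (by omega)
      have hab : m - 2 ^ (n₀ - j) < m - 2 ^ (n₀ - (j + 1)) := by omega
      have hbm : m - 2 ^ (n₀ - (j + 1)) < m := by
        have : (1 : ℕ) ≤ 2 ^ (n₀ - (j + 1)) := Nat.one_le_two_pow
        omega
      obtain ⟨w, hwT, hw1, hw2⟩ :=
        hARω.interp (m - 2 ^ (n₀ - j)) (m - 2 ^ (n₀ - (j + 1))) m z x' hab hbm hz
      -- bound the increment using ¬ A_{j+1}(n₀,m)
      have hkI : (j + 1) ∈ ISet n₀ m := by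
        refine ⟨by omega, ?_⟩
        have : n₀ - (j + 1) + 1 = n₀ - j := by omega
        rw [this]; exact le_trans hpb hm
      have hA := hB1 (j + 1) hkI (by omega)
      simp only [eventA, Set.mem_setOf_eq, not_exists, not_and, not_le] at hA
      have hidx : n₀ - (j + 1) + 1 = n₀ - j := by omega
      have hinc : dE w z <
          (2 : ℝ) ^ ((n₀ : ℝ) / 2) * (2 : ℝ) ^ (-((j + 1 : ℕ) : ℝ) * α) := by
        have := hA x' hx'T z w
        rw [hidx] at this
        exact this hw1 hw2
      refine ⟨w, hw2, ?_⟩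
      have htri := dE_triangle w z y
      rw [Finset.sum_Ioc_succ_top hj, mul_add]
      have h2 : dE w z ≤ (2 : ℝ) ^ ((n₀ : ℝ) / 2) * r ^ (j + 1) := by
        rw [← hrpow (j + 1)]
        exact_mod_cast hinc.le
      calc dE w y ≤ dE w z + dE z y := htri
        _ ≤ (2 : ℝ) ^ ((n₀ : ℝ) / 2) * r ^ (j + 1)
              + (2 : ℝ) ^ ((n₀ : ℝ) / 2) * ∑ k ∈ Finset.Ioc ℓ j, r ^ k := by
            gcongr
        _ = _ := by ring
  obtain ⟨z, hz, hzd⟩ := key n₀ hℓn le_rfl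
  -- the final step using ¬ A_{n₀}(n₀, m+1)
  have hznm : rel ω (m + 1 - 2 ^ (n₀ - n₀ + 1)) z (m + 1 - 2 ^ (n₀ - n₀)) x' := by
    have e1 : m + 1 - 2 ^ (n₀ - n₀ + 1) = m - 1 := by simp
    have e2 : m + 1 - 2 ^ (n₀ - n₀) = m := by simp
    rw [e1, e2]
    have : m - 2 ^ (n₀ - n₀) = m - 1 := by simp
    rwa [this] at hz
  simp only [eventA, Set.mem_setOf_eq, not_exists, not_and, not_le] at hB2
  have hfin : dE x' z <
      (2 : ℝ) ^ ((n₀ : ℝ) / 2) * (2 : ℝ) ^ (-(n₀ : ℝ) * α) := by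
    have e2 : m + 1 - 2 ^ (n₀ - n₀) = m := by simp
    have := hB2 x hxT z x' hznm
    rw [e2] at this
    exact this hrel2
  have hfin' : dE x' z ≤ (2 : ℝ) ^ ((n₀ : ℝ) / 2) * r ^ n₀ := by
    rw [← hrpow n₀]; exact_mod_cast hfin.le
  -- combine
  have htri := dE_triangle x' z y
  have hgeom := geom_aux hr0 hr1 ℓ n₀ hℓn
  have hpow : (2 : ℝ) ^ ((n₀ : ℝ) / 2 - (ℓ : ℝ) * α)
      = (2 : ℝ) ^ ((n₀ : ℝ) / 2) * r ^ ℓ := by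
    rw [← hrpow ℓ, ← Real.rpow_add (by norm_num)]
    ring_nf
  have h2pos : (0 : ℝ) < (2 : ℝ) ^ ((n₀ : ℝ) / 2) := Real.rpow_pos_of_pos (by norm_num) _
  calc dE x' y ≤ dE x' z + dE z y := htri
    _ ≤ (2 : ℝ) ^ ((n₀ : ℝ) / 2) * (r ^ n₀ + ∑ k ∈ Finset.Ioc ℓ n₀, r ^ k) := by
        rw [mul_add]; exact add_le_add hfin' hzd
    _ ≤ (2 : ℝ) ^ ((n₀ : ℝ) / 2) * (r ^ ℓ * (1 - r)⁻¹) := by gcongr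
    _ = (1 - r)⁻¹ * (2 : ℝ) ^ ((n₀ : ℝ) / 2 - (ℓ : ℝ) * α) := by
        rw [hpow]; ring

end AncestralPaper
end
end

section
/- Assume Conditions 1, 2 and 5 (with exponent κ > 4). Then there is a constant C such that for every α ∈ (0,1/2), every t* ≥ 1 and every n ≥ 1: μ_n( max{ |y − x| : (s,y) →ᵃ'ⁿ (t,x), t ∈ [s, s + 2/n], s ∈ ℤ₊/n, s ≤ t* } > n^{−α} ) ≤ C·t*·n^{2 − κ(1/2 − α)}. -/
open MeasureTheory Filter Set

noncomputable section

namespace AncestralPaper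

open scoped ENNReal
open scoped Classical

/-- Extension of the ancestral relation to real times. -/
def relR {d : ℕ} (rel : ℕ → ZLat d → ℕ → ZLat d → Prop)
    (s : ℝ) (y : ZLat d) (t : ℝ) (x : ZLat d) : Prop :=
  rel ⌊s⌋₊ y ⌊t⌋₊ x

/-- The survival event `{S⁽¹⁾ > t}`: the population is nonempty up to (real) time `t`. -/
def survives {d : ℕ} {Ω : Type*} (T : ℕ → Ω → Finset (ZLat d)) (t : ℝ) : Set Ω :=
  {ω | ∀ k : ℕ, (k : ℝ) ≤ t → (T k ω).Nonempty}

/-- Lemma `endpointinc`: assume Conditions 1, 2 and 5 (exponent `κ > 4`).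
Then there is a constant `C` such that for every `α ∈ (0,1/2)`, `t* ≥ 1` and `n ≥ 1`,
`μ_n( max{|y − x| : (s,y) →ᵃ'ⁿ (t,x), t ∈ [s,s+2/n], s ∈ ℤ₊/n, s ≤ t*} > n^{−α} )
  ≤ C·t*·n^{2 − κ(1/2 − α)}`. -/
theorem statement8 {d : ℕ} (hd : 1 ≤ d)
    {Ω : Type*} [mΩ : MeasurableSpace Ω] (P : Measure Ω) [IsProbabilityMeasure P]
    (F : Filtration ℕ mΩ)
    (T : ℕ → Ω → Finset (ZLat d)) (rel : Ω → ℕ → ZLat d → ℕ → ZLat d → Prop)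
    (hT0 : ∀ᵐ ω ∂P, T 0 ω = {(0 : ZLat d)})
    (hadapted : ∀ k x, MeasurableSet[F k] {ω | x ∈ T k ω})
    (hrelmeas : ∀ k m x y, MeasurableSet[F m] {ω | rel ω k y m x})
    (hAR : ∀ᵐ ω ∂P, ARProps (fun k => T k ω) (rel ω))
    -- Condition 1
    (mf : ℝ → ℝ) (sD c₁ : ℝ) (hsD : 0 < sD) (hc₁ : 1 ≤ c₁)
    (hmf_pos : ∀ t : ℝ, 0 ≤ t → 0 < mf t)
    (hmf_mono : MonotoneOn mf (Set.Ici 0))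
    (hmf_top : Tendsto mf atTop atTop)
    (hsurv : Tendsto (fun t => mf t * (P (survives T t)).toReal) atTop (nhds sD))
    (hmf_reg : ∀ s : ℝ, 0 < s → Tendsto (fun t => mf (s * t) / mf t) atTop (nhds s))
    (hmf_r1 : ∀ s n : ℝ, 1 ≤ s → 1 ≤ n → mf (s * n) / mf n ≤ c₁ * s)
    (hmf_r2 : ∀ s n : ℝ, 1 ≤ s → s ≤ n → mf n / mf (s * n) ≤ c₁ / s)
    -- Condition 2
    (c₂ : ℝ)
    (hcond2 : ∀ k : ℕ, ∫⁻ ω, ((T k ω).card : ℝ≥0∞) ∂P ≤ ENNReal.ofReal c₂)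
    -- Condition 5 with exponent `κ > 4`
    (κ : ℝ) (hκ : 4 < κ) (c₅ : ℝ) (hc₅ : 0 < c₅)
    (hcond5 : ∀ (k : ℕ) (y : ZLat d) (N : ℝ), 0 < N → ∀ᵐ ω ∂P, y ∈ T k ω →
      (P[Set.indicator
          {ω' | ∃ (t : ℝ) (x : ZLat d), (k : ℝ) ≤ t ∧ t ≤ (k : ℝ) + 2 ∧
            relR (rel ω') (k : ℝ) y t x ∧ N ≤ dE y x}
          (fun _ => (1 : ℝ)) | F k]) ω ≤ c₅ * N ^ (-κ)) :
    ∃ C : ℝ, 0 < C ∧ ∀ α : ℝ, α ∈ Set.Ioo (0 : ℝ) (1 / 2) →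
      ∀ tstar : ℝ, 1 ≤ tstar → ∀ n : ℝ, 1 ≤ n →
        mf n * (P {ω | ∃ (j : ℕ) (t : ℝ) (x y : ZLat d),
            (j : ℝ) / n ≤ tstar ∧ (j : ℝ) / n ≤ t ∧ t ≤ (j : ℝ) / n + 2 / n ∧
            relN (rel ω) n ((j : ℝ) / n) y t x ∧
            n ^ (-α) < dE y x / Real.sqrt n}).toReal
          ≤ C * tstar * n ^ (2 - κ * (1 / 2 - α)) := by
  classical
  have hmf1 : 0 < mf 1 := hmf_pos 1 (by norm_num)
  have hc₂' : (0:ℝ) < max c₂ 0 + 1 := by positivity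
  set c₂' : ℝ := max c₂ 0 + 1 with hc₂'def
  refine ⟨2 * c₁ * mf 1 * c₅ * c₂', by positivity, ?_⟩
  intro α hα tstar htstar n hn
  have hn0 : (0:ℝ) < n := lt_of_lt_of_le one_pos hn
  set N : ℝ := n ^ ((1:ℝ)/2 - α) with hNdef
  have hNpos : 0 < N := Real.rpow_pos_of_pos hn0 _
  set b : ℝ := c₅ * N ^ (-κ) with hbdef
  have hb0 : 0 ≤ b := mul_nonneg hc₅.le (Real.rpow_nonneg hNpos.le _)
  set M : ℕ := ⌊tstar * n⌋₊ + 1 with hMdef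
  -- the "bad" sets from Condition 5
  set A : ℕ → ZLat d → Set Ω := fun j y =>
    {ω' | ∃ (t : ℝ) (x : ZLat d), (j : ℝ) ≤ t ∧ t ≤ (j : ℝ) + 2 ∧
      relR (rel ω') (j : ℝ) y t x ∧ N ≤ dE y x} with hAdef
  set S : ℕ → ZLat d → Set Ω := fun j y => {ω | y ∈ T j ω} with hSdef
  have hSmeas : ∀ j y, MeasurableSet (S j y) := fun j y => F.le j _ (hadapted j y)
  have hAmeas : ∀ j y, MeasurableSet (A j y) := by
    intro j y
    have hrepr : A j y = ⋃ (x : ZLat d), ⋃ (m : ℕ),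
        {ω | ((∃ t : ℝ, (j:ℝ) ≤ t ∧ t ≤ (j:ℝ) + 2 ∧ ⌊t⌋₊ = m) ∧ N ≤ dE y x)
          ∧ rel ω j y m x} := by
      ext ω
      simp only [hAdef, mem_iUnion, mem_setOf_eq]
      constructor
      · rintro ⟨t, x, h1, h2, h3, h4⟩
        refine ⟨x, ⌊t⌋₊, ⟨⟨t, h1, h2, rfl⟩, h4⟩, ?_⟩
        simpa [relR, Nat.floor_natCast] using h3
      · rintro ⟨x, m, ⟨⟨t, h1, h2, rfl⟩, h4⟩, h3⟩
        exact ⟨t, x, h1, h2, by simpa [relR, Nat.floor_natCast] using h3, h4⟩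
    rw [hrepr]
    refine MeasurableSet.iUnion fun x => MeasurableSet.iUnion fun m => ?_
    by_cases hp : (∃ t : ℝ, (j:ℝ) ≤ t ∧ t ≤ (j:ℝ) + 2 ∧ ⌊t⌋₊ = m) ∧ N ≤ dE y x
    · have : {ω | ((∃ t : ℝ, (j:ℝ) ≤ t ∧ t ≤ (j:ℝ) + 2 ∧ ⌊t⌋₊ = m) ∧ N ≤ dE y x)
          ∧ rel ω j y m x} = {ω | rel ω j y m x} := by ext ω; simp [hp]
      rw [this]; exact F.le m _ (hrelmeas j m x y)
    · have : {ω | ((∃ t : ℝ, (j:ℝ) ≤ t ∧ t ≤ (j:ℝ) + 2 ∧ ⌊t⌋₊ = m) ∧ N ≤ dE y x)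
          ∧ rel ω j y m x} = ∅ := by ext ω; simp [hp]
      rw [this]; exact MeasurableSet.empty
  -- per-cell estimate from Condition 5
  have key : ∀ j y, P (S j y ∩ A j y) ≤ ENNReal.ofReal b * P (S j y) := by
    intro j y
    have hint : Integrable ((A j y).indicator fun _ => (1:ℝ)) P :=
      (integrable_const 1).indicator (hAmeas j y)
    have h1 : (P (S j y ∩ A j y)).toReal
        = ∫ ω in S j y, (A j y).indicator (fun _ => (1:ℝ)) ω ∂P := by
      rw [setIntegral_indicator (hAmeas j y), setIntegral_const, smul_eq_mul, mul_one]; rfl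
    have h2 : ∫ ω in S j y, (A j y).indicator (fun _ => (1:ℝ)) ω ∂P
        = ∫ ω in S j y, (P[(A j y).indicator (fun _ => (1:ℝ)) | F j]) ω ∂P :=
      (setIntegral_condExp (F.le j) hint (hadapted j y)).symm
    have h3 : ∫ ω in S j y, (P[(A j y).indicator (fun _ => (1:ℝ)) | F j]) ω ∂P
        ≤ ∫ ω in S j y, b ∂P := by
      refine setIntegral_mono_ae_restrict integrable_condExp.integrableOn
        integrableOn_const ?_
      exact (ae_restrict_iff' (hSmeas j y)).2 (hcond5 j y N hNpos)
    have h4 : ∫ ω in S j y, b ∂P = (P (S j y)).toReal * b := by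
      rw [setIntegral_const, smul_eq_mul]; rfl
    have h5 : (P (S j y ∩ A j y)).toReal ≤ (P (S j y)).toReal * b := by
      rw [h1, h2]; exact h3.trans_eq h4
    calc P (S j y ∩ A j y) = ENNReal.ofReal ((P (S j y ∩ A j y)).toReal) :=
          (ENNReal.ofReal_toReal (measure_ne_top _ _)).symm
      _ ≤ ENNReal.ofReal ((P (S j y)).toReal * b) := ENNReal.ofReal_le_ofReal h5
      _ = ENNReal.ofReal b * P (S j y) := by
          rw [ENNReal.ofReal_mul ENNReal.toReal_nonneg,
            ENNReal.ofReal_toReal (measure_ne_top _ _), mul_comm]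
  -- Condition 2 gives the expected number of cells
  have hsumS : ∀ j : ℕ, ∑' y : ZLat d, P (S j y) ≤ ENNReal.ofReal c₂ := by
    intro j
    have heq : ∑' y : ZLat d, P (S j y)
        = ∫⁻ ω, ((T j ω).card : ℝ≥0∞) ∂P := by
      have h1 : ∀ y : ZLat d, P (S j y)
          = ∫⁻ ω, (S j y).indicator (fun _ => (1:ℝ≥0∞)) ω ∂P := by
        intro y
        rw [lintegral_indicator (hSmeas j y), setLIntegral_one]
      have h2 : ∀ ω : Ω, ∑' y : ZLat d, (S j y).indicator (fun _ => (1:ℝ≥0∞)) ω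
          = ((T j ω).card : ℝ≥0∞) := by
        intro ω
        have : ∀ y : ZLat d, (S j y).indicator (fun _ => (1:ℝ≥0∞)) ω
            = if y ∈ T j ω then 1 else 0 := by
          intro y; by_cases hy : y ∈ T j ω <;> simp [hSdef, Set.indicator, hy]
        rw [tsum_congr this, tsum_eq_sum (s := T j ω) (by intro y hy; simp [hy])]
        simp
      calc ∑' y : ZLat d, P (S j y)
          = ∑' y : ZLat d, ∫⁻ ω, (S j y).indicator (fun _ => (1:ℝ≥0∞)) ω ∂P :=
            tsum_congr h1
        _ = ∫⁻ ω, ∑' y : ZLat d, (S j y).indicator (fun _ => (1:ℝ≥0∞)) ω ∂P :=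
            (lintegral_tsum fun y =>
              ((measurable_const.indicator (hSmeas j y)).aemeasurable)).symm
        _ = ∫⁻ ω, ((T j ω).card : ℝ≥0∞) ∂P := by
            exact lintegral_congr fun ω => h2 ω
    rw [heq]; exact hcond2 j
  -- the event is a.s. contained in the union of the cells
  set Ev : Set Ω := {ω | ∃ (j : ℕ) (t : ℝ) (x y : ZLat d),
      (j : ℝ) / n ≤ tstar ∧ (j : ℝ) / n ≤ t ∧ t ≤ (j : ℝ) / n + 2 / n ∧
      relN (rel ω) n ((j : ℝ) / n) y t x ∧
      n ^ (-α) < dE y x / Real.sqrt n} with hEvdef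
  have hsub : Ev ≤ᵐ[P] ⋃ j ∈ Finset.range M, ⋃ y : ZLat d, (S j y ∩ A j y) := by
    filter_upwards [hAR] with ω hω
    intro hEv
    obtain ⟨j, t, x, y, hjt, h1, h2, h3, h4⟩ := hEv
    have hnj : n * ((j:ℝ) / n) = (j:ℝ) := by field_simp
    have hrel : rel ω j y ⌊n * t⌋₊ x := by
      have := h3
      rw [relN, hnj, Nat.floor_natCast] at this
      exact this
    have hyT : y ∈ T j ω := ((hω.basic j ⌊n * t⌋₊ x y) hrel).2.1
    have hjM : j ∈ Finset.range M := by
      rw [Finset.mem_range, hMdef, Nat.lt_succ_iff]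
      exact Nat.le_floor (by
        have : (j:ℝ) ≤ tstar * n := by
          calc (j:ℝ) = ((j:ℝ)/n) * n := by field_simp
            _ ≤ tstar * n := by gcongr
        exact this)
    have hjt1 : (j:ℝ) ≤ n * t := by
      rw [← hnj]; gcongr
    have hjt2 : n * t ≤ (j:ℝ) + 2 := by
      have : n * t ≤ n * ((j:ℝ)/n + 2/n) := by gcongr
      calc n * t ≤ n * ((j:ℝ)/n + 2/n) := this
        _ = (j:ℝ) + 2 := by field_simp
    have hNle : N ≤ dE y x := by
      have hsq : Real.sqrt n = n ^ ((1:ℝ)/2) := Real.sqrt_eq_rpow n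
      have hsqpos : 0 < Real.sqrt n := Real.sqrt_pos.2 hn0
      have hlt : n ^ (-α) * Real.sqrt n < dE y x := by
        have := (lt_div_iff₀ hsqpos).1 h4
        linarith [this]
      have : N = n ^ (-α) * Real.sqrt n := by
        rw [hsq, hNdef, ← Real.rpow_add hn0]; ring_nf
      linarith [hlt, this.le]
    have hrelR : relR (rel ω) (j:ℝ) y (n * t) x := by
      rw [relR, Nat.floor_natCast]; exact hrel
    refine mem_biUnion hjM (mem_iUnion.2 ⟨y, ⟨hyT, ?_⟩⟩)
    exact ⟨n * t, x, hjt1, hjt2, hrelR, hNle⟩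
  -- combine into the measure bound
  have hPE : P Ev ≤ (M : ℝ≥0∞) * (ENNReal.ofReal b * ENNReal.ofReal c₂) := by
    refine (measure_mono_ae hsub).trans ?_
    refine (measure_biUnion_finset_le _ _).trans ?_
    have hterm : ∀ j ∈ Finset.range M,
        P (⋃ y : ZLat d, (S j y ∩ A j y)) ≤ ENNReal.ofReal b * ENNReal.ofReal c₂ := by
      intro j _
      calc P (⋃ y : ZLat d, (S j y ∩ A j y))
          ≤ ∑' y : ZLat d, P (S j y ∩ A j y) := measure_iUnion_le _
        _ ≤ ∑' y : ZLat d, ENNReal.ofReal b * P (S j y) :=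
            ENNReal.tsum_le_tsum fun y => key j y
        _ = ENNReal.ofReal b * ∑' y : ZLat d, P (S j y) := ENNReal.tsum_mul_left
        _ ≤ ENNReal.ofReal b * ENNReal.ofReal c₂ := by
            gcongr; exact hsumS j
    calc ∑ j ∈ Finset.range M, P (⋃ y : ZLat d, (S j y ∩ A j y))
        ≤ ∑ _j ∈ Finset.range M, (ENNReal.ofReal b * ENNReal.ofReal c₂) :=
          Finset.sum_le_sum hterm
      _ = (M : ℝ≥0∞) * (ENNReal.ofReal b * ENNReal.ofReal c₂) := by
          rw [Finset.sum_const, Finset.card_range, nsmul_eq_mul]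
  have hPEreal : (P Ev).toReal ≤ (M:ℝ) * (b * c₂') := by
    refine ENNReal.toReal_le_of_le_ofReal (by positivity) ?_
    refine hPE.trans ?_
    have hc₂le : ENNReal.ofReal c₂ ≤ ENNReal.ofReal c₂' :=
      ENNReal.ofReal_le_ofReal (by rw [hc₂'def]; nlinarith [le_max_left c₂ (0:ℝ)])
    calc (M : ℝ≥0∞) * (ENNReal.ofReal b * ENNReal.ofReal c₂)
        ≤ (M : ℝ≥0∞) * (ENNReal.ofReal b * ENNReal.ofReal c₂') := by gcongr
      _ = ENNReal.ofReal ((M:ℝ) * (b * c₂')) := by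
          rw [hbdef]
          rw [ENNReal.ofReal_mul (by positivity : (0:ℝ) ≤ (M:ℝ)),
            ENNReal.ofReal_mul (by positivity : (0:ℝ) ≤ c₅ * N ^ (-κ)),
            ENNReal.ofReal_mul hc₅.le, ENNReal.ofReal_natCast]
  -- regular variation bound for mf
  have hmfn : mf n ≤ c₁ * mf 1 * n := by
    have := hmf_r1 n 1 hn le_rfl
    rw [mul_one] at this
    have h := (div_le_iff₀ hmf1).1 this
    calc mf n ≤ c₁ * n * mf 1 := h
      _ = c₁ * mf 1 * n := by ring
  have hmfn0 : 0 ≤ mf n := (hmf_pos n (by linarith)).le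
  -- bound on M
  have hMle : (M:ℝ) ≤ 2 * tstar * n := by
    have h1 : (M:ℝ) = (⌊tstar * n⌋₊ : ℝ) + 1 := by rw [hMdef]; push_cast; ring
    have h2 : (⌊tstar * n⌋₊ : ℝ) ≤ tstar * n := Nat.floor_le (by positivity)
    have h3 : (1:ℝ) ≤ tstar * n := by nlinarith
    rw [h1]; nlinarith
  -- rpow algebra
  have hNκ : N ^ (-κ) = n ^ (-(κ * (1/2 - α))) := by
    rw [hNdef, ← Real.rpow_mul hn0.le]
    ring_nf
  have hsplit : n ^ (2 - κ * (1/2 - α)) = n * n * n ^ (-(κ * (1/2 - α))) := by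
    have h2 : n ^ (2:ℝ) = n * n := by
      rw [show (2:ℝ) = ((2:ℕ):ℝ) by norm_num, Real.rpow_natCast]; ring
    rw [show (2 - κ * (1/2 - α)) = 2 + (-(κ * (1/2 - α))) by ring,
      Real.rpow_add hn0, h2]
  -- finish
  have hrpow0 : (0:ℝ) ≤ n ^ (-(κ * (1/2 - α))) := Real.rpow_nonneg hn0.le _
  have step : mf n * (P Ev).toReal
      ≤ (c₁ * mf 1 * n) * ((2 * tstar * n) * (b * c₂')) := by
    have h1 : mf n * (P Ev).toReal ≤ (c₁ * mf 1 * n) * ((M:ℝ) * (b * c₂')) :=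
      mul_le_mul hmfn hPEreal ENNReal.toReal_nonneg (by positivity)
    refine h1.trans ?_
    gcongr
  refine step.trans ?_
  rw [hbdef, hNκ, hsplit]
  ring_nf
  rfl

end AncestralPaper
end
end

section
/- Fix an outcome at which properties (AR)(i) and (AR)(ii) hold. Let α ∈ (0,1/2), n ≥ 1, C₀ ≥ 1, and suppose δ ∈ [1/n, 1] is such that whenever 0 ≤ s₁ ≤ s₂ with s₂ − s₁ ≤ δ and (s₁,y₁) →ᵃ'ⁿ (s₂,y₂), one has |y₁ − y₂| ≤ C₀·(|s₂ − s₁|^α + n^{−α}). Then r₀(R⁽ⁿ⁾) ≤ 2C₀·(S⁽ⁿ⁾·δ^{α−1} + 1), where R⁽ⁿ⁾ := ∪_{t ≥ 0} T⁽ⁿ⁾_t and r₀(K) := sup{|x| : x ∈ K}. -/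
open MeasureTheory Filter Set

noncomputable section

namespace AncestralPaper

/-- Lemma `mcc`(a), pathwise: at an outcome where (AR)(i),(ii) hold, if the
rescaled ancestral relation satisfies the modulus of continuity with constants `C₀, δ`
(where `δ ∈ [1/n, 1]`), then the radius of the rescaled range is bounded by
`2C₀·(S⁽ⁿ⁾·δ^{α−1} + 1)`, where `S⁽ⁿ⁾` is the rescaled survival time. -/
theorem statement9 {d : ℕ} (hd : 1 ≤ d)
    (T : ℕ → Finset (ZLat d)) (rel : ℕ → ZLat d → ℕ → ZLat d → Prop)
    (hT0 : T 0 = {(0 : ZLat d)})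
    (hAR : ARProps T rel)
    (α : ℝ) (hα : α ∈ Set.Ioo (0 : ℝ) (1 / 2))
    (n : ℝ) (hn : 1 ≤ n) (C₀ : ℝ) (hC₀ : 1 ≤ C₀)
    (δ : ℝ) (hδ : δ ∈ Set.Icc (1 / n) 1)
    (hmod : ∀ s₁ s₂ : ℝ, 0 ≤ s₁ → s₁ ≤ s₂ → s₂ - s₁ ≤ δ →
      ∀ y₁ y₂ : ZLat d, relN rel n s₁ y₁ s₂ y₂ →
      dE y₁ y₂ / Real.sqrt n ≤ C₀ * ((s₂ - s₁) ^ α + n ^ (-α)))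
    (S : ℝ) (hS : IsGLB {t : ℝ | 0 ≤ t ∧ T ⌊n * t⌋₊ = ∅} S) :
    ∀ t : ℝ, 0 ≤ t → ∀ x ∈ T ⌊n * t⌋₊,
      ‖toE x‖ / Real.sqrt n ≤ 2 * C₀ * (S * δ ^ (α - 1) + 1) := by
  obtain ⟨hα0, hα2⟩ := hα
  obtain ⟨hδ1, hδ2⟩ := hδ
  have hn0 : (0:ℝ) < n := by linarith
  have hδ0 : 0 < δ := lt_of_lt_of_le (by positivity) hδ1
  have hnδ : 1 ≤ n * δ := by
    rw [div_le_iff₀ hn0] at hδ1; linarith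
  have hsqrt : (0:ℝ) < Real.sqrt n := Real.sqrt_pos.2 hn0
  have hC0 : (0:ℝ) < C₀ := by linarith
  have hδα : (0:ℝ) < δ ^ α := Real.rpow_pos_of_pos hδ0 α
  set B : ℝ := 2 * C₀ * δ ^ α with hB
  have hBpos : 0 < B := by positivity
  have htoE0 : toE (0 : ZLat d) = 0 := by ext i; simp [toE]
  -- n^{-α} ≤ δ^α
  have hnα : n ^ (-α) ≤ δ ^ α := by
    rw [Real.rpow_neg hn0.le, ← Real.inv_rpow hn0.le]
    exact Real.rpow_le_rpow (by positivity) (by rwa [← one_div]) hα0.le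
  -- one-step estimate
  have hstep : ∀ s t : ℝ, 0 ≤ s → s ≤ t → t - s ≤ δ → ∀ y x : ZLat d,
      rel ⌊n * s⌋₊ y ⌊n * t⌋₊ x → dE y x / Real.sqrt n ≤ B := by
    intro s t hs hst htd y x hrel
    have h1 := hmod s t hs hst htd y x hrel
    have h2 : (t - s) ^ α ≤ δ ^ α :=
      Real.rpow_le_rpow (by linarith) htd hα0.le
    calc dE y x / Real.sqrt n ≤ C₀ * ((t - s) ^ α + n ^ (-α)) := h1
      _ ≤ C₀ * (δ ^ α + δ ^ α) := by nlinarith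
      _ = B := by rw [hB]; ring
  -- the chaining estimate
  have chain : ∀ N : ℕ, ∀ t : ℝ, 0 ≤ t → t ≤ (N : ℝ) * δ → ∀ x : ZLat d,
      rel 0 0 ⌊n * t⌋₊ x → ‖toE x‖ / Real.sqrt n ≤ (N : ℝ) * B := by
    intro N
    induction N with
    | zero =>
      intro t ht0 htN x hx
      have ht : t = 0 := le_antisymm (by simpa using htN) ht0
      subst ht
      have hfl : ⌊n * (0:ℝ)⌋₊ = 0 := by simp
      rw [hfl] at hx
      obtain ⟨hx0, -⟩ := (hAR.refl_iff 0 x 0).1 hx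
      subst hx0
      simp [htoE0]
    | succ N IH =>
      intro t ht0 htN x hx
      have hNB : (N : ℝ) * B ≤ ((N : ℕ) + 1 : ℝ) * B := by nlinarith
      by_cases hcase : t ≤ (N : ℝ) * δ
      · have h := IH t ht0 hcase x hx
        push_cast
        push_cast at h
        linarith
      · push_neg at hcase
        set s : ℝ := (N : ℝ) * δ with hsdef
        have hs0 : 0 ≤ s := by positivity
        have hst : s ≤ t := hcase.le
        have htsδ : t - s ≤ δ := by
          push_cast at htN
          rw [hsdef]; linarith
        have hkm : ⌊n * s⌋₊ ≤ ⌊n * t⌋₊ :=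
          Nat.floor_le_floor (by nlinarith)
        rcases eq_or_lt_of_le hkm with heq | hlt
        · -- same generation: use IH at s
          rw [← heq] at hx
          have h := IH s hs0 (le_of_eq rfl) x hx
          push_cast
          push_cast at h
          linarith
        · by_cases hN : N = 0
          · -- single step from the root
            subst hN
            have hs' : s = 0 := by simp [hsdef]
            have hfl : ⌊n * (0:ℝ)⌋₊ = 0 := by simp
            have hrel' : rel ⌊n * (0:ℝ)⌋₊ (0 : ZLat d) ⌊n * t⌋₊ x := by
              rw [hfl]; exact hx
            have h := hstep 0 t le_rfl ht0 (by rw [hs'] at htsδ; linarith) 0 x hrel'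
            have hd0 : dE (0 : ZLat d) x = ‖toE x‖ := by
              rw [dE, htoE0]; simp
            rw [hd0] at h
            push_cast
            linarith
          · -- interpolate at generation ⌊n*s⌋₊
            have hk1 : 1 ≤ ⌊n * s⌋₊ := by
              apply Nat.le_floor
              have hN1 : (1:ℝ) ≤ (N : ℝ) := by
                exact_mod_cast Nat.one_le_iff_ne_zero.2 hN
              push_cast
              calc (1:ℝ) ≤ (n * δ) * 1 := by linarith
                _ ≤ (n * δ) * (N : ℝ) := by nlinarith
                _ = n * s := by rw [hsdef]; ring
            obtain ⟨y, hyT, hy1, hy2⟩ :=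
              hAR.interp 0 ⌊n * s⌋₊ ⌊n * t⌋₊ 0 x (by omega) hlt hx
            have hIH := IH s hs0 (le_of_eq rfl) y hy1
            have hstp := hstep s t hs0 hst htsδ y x hy2
            have htri : ‖toE x‖ ≤ ‖toE y‖ + dE y x := by
              have : toE x = toE y + (toE x - toE y) := by abel
              calc ‖toE x‖ = ‖toE y + (toE x - toE y)‖ := by rw [← this]
                _ ≤ ‖toE y‖ + ‖toE x - toE y‖ := norm_add_le _ _
                _ = ‖toE y‖ + dE y x := by rw [dE, norm_sub_rev]
            have hdiv : ‖toE x‖ / Real.sqrt n ≤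
                ‖toE y‖ / Real.sqrt n + dE y x / Real.sqrt n := by
              rw [← add_div]
              exact div_le_div_of_nonneg_right htri hsqrt.le
            push_cast
            push_cast at hIH
            linarith
  -- main argument
  intro t ht x hxT
  have hrel : rel 0 0 ⌊n * t⌋₊ x := (hAR.zero_iff _ x).2 hxT
  -- t ≤ S
  have htS : t ≤ S := by
    apply hS.2
    intro s' hs'
    obtain ⟨hs'0, hs'e⟩ := hs'
    by_contra h
    push_neg at h
    have hkm : ⌊n * s'⌋₊ ≤ ⌊n * t⌋₊ :=
      Nat.floor_le_floor (by nlinarith)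
    have hk0 : ⌊n * s'⌋₊ ≠ 0 := by
      intro h0
      rw [h0, hT0] at hs'e
      simpa using hs'e
    rcases eq_or_lt_of_le hkm with heq | hlt
    · rw [← heq, hs'e] at hxT
      simpa using hxT
    · obtain ⟨y, hyT, -, -⟩ :=
        hAR.interp 0 ⌊n * s'⌋₊ ⌊n * t⌋₊ 0 x (by omega) hlt hrel
      rw [hs'e] at hyT
      simpa using hyT
  set N : ℕ := ⌈t / δ⌉₊ with hNdef
  have ht1 : t ≤ (N : ℝ) * δ := by
    rw [← div_le_iff₀ hδ0]
    exact Nat.le_ceil _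
  have h2 := chain N t ht ht1 x hrel
  have hNle : (N : ℝ) ≤ t / δ + 1 :=
    (Nat.ceil_lt_add_one (by positivity)).le
  have hb : δ ^ (α - 1) = δ ^ α / δ := by
    rw [Real.rpow_sub hδ0, Real.rpow_one]
  have hb0 : 0 ≤ δ ^ (α - 1) := (Real.rpow_pos_of_pos hδ0 _).le
  have hδα1 : δ ^ α ≤ 1 := Real.rpow_le_one hδ0.le hδ2 hα0.le
  have h3 : (N : ℝ) * B ≤ (t / δ + 1) * B :=
    mul_le_mul_of_nonneg_right hNle hBpos.le
  have h4 : (t / δ + 1) * B = 2 * C₀ * (t * δ ^ (α - 1) + δ ^ α) := by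
    rw [hB, hb]
    ring
  have h5 : 2 * C₀ * (t * δ ^ (α - 1) + δ ^ α) ≤ 2 * C₀ * (S * δ ^ (α - 1) + 1) := by
    have h5a := mul_le_mul_of_nonneg_right htS hb0
    have h5b : t * δ ^ (α - 1) + δ ^ α ≤ S * δ ^ (α - 1) + 1 := by linarith
    exact mul_le_mul_of_nonneg_left h5b (by positivity)
  linarith

end AncestralPaper
end
end

section
/- Let ν and ν_n (n ∈ ℕ) be finite Borel measures on ℝ^d with ν_n → ν weakly, and suppose supp(ν) is compact. Then Δ₁(supp(ν), supp(ν_n)) → 0 as n → ∞; that is, for every ε > 0 there exists N such that for all n ≥ N, supp(ν) ⊆ {x ∈ ℝ^d : dist(x, supp(ν_n)) ≤ ε}. -/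
open MeasureTheory Filter

noncomputable section

/-- The topological support of a Borel measure: the set of points all of whose open
neighbourhoods have positive measure. -/
def msupport {E : Type*} [TopologicalSpace E] [MeasurableSpace E] (μ : Measure E) : Set E :=
  {x | ∀ U : Set E, IsOpen U → x ∈ U → 0 < μ U}

lemma aux_null {E : Type*} [TopologicalSpace E] [SecondCountableTopology E]
    [MeasurableSpace E] (μ : Measure E) {U : Set E} (h : U ∩ msupport μ = ∅) : μ U = 0 := by
  obtain ⟨B, hBc, -, hB⟩ := TopologicalSpace.exists_countable_basis E
  set S := {b ∈ B | μ b = 0} with hS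
  have hsub : U ⊆ ⋃₀ S := by
    intro x hx
    have hxn : x ∉ msupport μ := fun hm => (Set.eq_empty_iff_forall_notMem.1 h x) ⟨hx, hm⟩
    simp only [msupport, Set.mem_setOf_eq, not_forall] at hxn
    obtain ⟨V, hVo, hxV, hV0⟩ := hxn
    have hV0 : μ V = 0 := by simpa [pos_iff_ne_zero] using hV0
    obtain ⟨b, hbB, hxb, hbV⟩ := hB.exists_subset_of_mem_open hxV hVo
    exact ⟨b, ⟨hbB, measure_mono_null hbV hV0⟩, hxb⟩
  refine measure_mono_null hsub ?_
  exact (measure_sUnion_null_iff (hBc.mono (Set.sep_subset _ _))).2 fun s hs => hs.2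

lemma aux_pos {E : Type*} [MeasurableSpace E] [PseudoMetricSpace E] [OpensMeasurableSpace E]
    (μ : Measure E) [IsFiniteMeasure μ] (g : BoundedContinuousFunction E ℝ)
    (hg : ∀ y, 0 ≤ g y) {x₀ : E} (hx : x₀ ∈ msupport μ) (h0 : 0 < g x₀) :
    0 < ∫ y, g y ∂μ := by
  set V := {y | g x₀ / 2 < g y} with hV
  have hVo : IsOpen V := isOpen_lt continuous_const g.continuous
  have hxV : x₀ ∈ V := by simp [hV]; linarith
  have hVpos : 0 < μ V := hx V hVo hxV
  have hint : Integrable (fun y => g y) μ := g.integrable μ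
  have h1 : (g x₀ / 2) * (μ V).toReal ≤ ∫ y in V, g y ∂μ :=
    setIntegral_ge_of_const_le_real hVo.measurableSet (measure_ne_top μ V)
      (fun x hx => le_of_lt hx) hint.integrableOn
  have h2 : ∫ y in V, g y ∂μ ≤ ∫ y, g y ∂μ :=
    setIntegral_le_integral hint (Filter.Eventually.of_forall hg)
  have h3 : 0 < (μ V).toReal := ENNReal.toReal_pos hVpos.ne' (measure_ne_top μ V)
  nlinarith

lemma aux_ne {E : Type*} [MeasurableSpace E] (μ : Measure E)
    (g : E → ℝ) (hg : ∀ y, 0 ≤ g y) (h : 0 < ∫ y, g y ∂μ) :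
    μ {y | 0 < g y} ≠ 0 := by
  intro h0
  have hae : g =ᵐ[μ] 0 := by
    refine measure_mono_null ?_ h0
    intro y hy
    simp only [Set.mem_setOf_eq, Pi.zero_apply] at hy ⊢
    exact lt_of_le_of_ne (hg y) (Ne.symm hy)
  rw [integral_congr_ae hae] at h
  simp at h

/-- Lemma `suppusc`: if the finite measures `ν_n` converge weakly to `ν`
(i.e. integrals of bounded continuous functions converge) and `supp(ν)` is compact, then
`Δ₁(supp(ν), supp(ν_n)) → 0`: for every `ε > 0`, eventually every point of `supp(ν)` is
within distance `ε` of `supp(ν_n)`. -/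
theorem statement11 {d : ℕ} (hd : 1 ≤ d)
    (ν : Measure (EuclideanSpace ℝ (Fin d))) [IsFiniteMeasure ν]
    (νs : ℕ → Measure (EuclideanSpace ℝ (Fin d))) (hfin : ∀ n, IsFiniteMeasure (νs n))
    (hweak : ∀ g : BoundedContinuousFunction (EuclideanSpace ℝ (Fin d)) ℝ,
      Tendsto (fun n => ∫ x, g x ∂(νs n)) atTop (nhds (∫ x, g x ∂ν)))
    (hcpt : IsCompact (msupport ν)) :
    ∀ ε : ℝ, 0 < ε → ∃ N : ℕ, ∀ n : ℕ, N ≤ n → ∀ x ∈ msupport ν,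
      EMetric.infEdist x (msupport (νs n)) ≤ ENNReal.ofReal ε := by
  intro ε hε
  set r := ε / 2 with hr
  have hrpos : 0 < r := by positivity
  -- bump functions
  set g : EuclideanSpace ℝ (Fin d) → BoundedContinuousFunction (EuclideanSpace ℝ (Fin d)) ℝ :=
    fun c => BoundedContinuousFunction.ofNormedAddCommGroup
      (fun y => max (r - dist y c) 0)
      (((continuous_const.sub (continuous_id.dist continuous_const)).max continuous_const)) r
      (by
        intro y
        rw [Real.norm_eq_abs, abs_of_nonneg (le_max_right _ _)]
        have := dist_nonneg (x := y) (y := c)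
        rw [max_le_iff]
        constructor <;> linarith) with hg
  have hgval : ∀ c y, g c y = max (r - dist y c) 0 := fun c y => rfl
  have hgnn : ∀ c y, 0 ≤ g c y := fun c y => le_max_right _ _
  have hgc : ∀ c, 0 < g c c := by
    intro c; rw [hgval]; simp [hrpos, le_of_lt hrpos]
  -- finite subcover
  obtain ⟨t, hts, htfin, htcov⟩ := hcpt.elim_finite_subcover_image
    (b := msupport ν) (c := fun c => Metric.ball c r)
    (fun c _ => Metric.isOpen_ball)
    (fun x hx => Set.mem_biUnion hx (Metric.mem_ball_self hrpos))
  -- eventually all integrals positive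
  have hev : ∀ᶠ n in atTop, ∀ c ∈ t, 0 < ∫ y, g c y ∂(νs n) := by
    rw [eventually_all_finite htfin]
    intro c hc
    have hpos : 0 < ∫ y, g c y ∂ν := aux_pos ν (g c) (hgnn c) (hts hc) (hgc c)
    exact (hweak (g c)).eventually (eventually_gt_nhds hpos)
  obtain ⟨N, hN⟩ := eventually_atTop.1 hev
  refine ⟨N, fun n hn x hx => ?_⟩
  haveI := hfin n
  obtain ⟨c, hct, hxc⟩ := Set.mem_iUnion₂.1 (htcov hx)
  have hint : 0 < ∫ y, g c y ∂(νs n) := hN n hn c hct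
  have hne : (νs n) {y | 0 < g c y} ≠ 0 := aux_ne (νs n) (g c) (hgnn c) hint
  -- there is a support point in {0 < g c}
  have hnonempty : ({y | 0 < g c y} ∩ msupport (νs n)).Nonempty := by
    by_contra hcon
    exact hne (aux_null (νs n) (Set.not_nonempty_iff_eq_empty.1 hcon))
  obtain ⟨y, hy1, hy2⟩ := hnonempty
  have hdyc : dist y c < r := by
    have hy1' : 0 < max (r - dist y c) 0 := hy1
    rcases lt_max_iff.1 hy1' with h | h
    · linarith
    · exact absurd h (lt_irrefl 0)
  have hdxy : dist x y ≤ ε := by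
    calc dist x y ≤ dist x c + dist c y := dist_triangle x c y
    _ ≤ r + r := by
        have := Metric.mem_ball.1 hxc
        rw [dist_comm c y]
        linarith
    _ = ε := by rw [hr]; ring
  calc EMetric.infEdist x (msupport (νs n)) ≤ edist x y := EMetric.infEdist_le_edist_of_mem hy2
  _ = ENNReal.ofReal (dist x y) := by rw [edist_dist]
  _ ≤ ENNReal.ofReal ε := ENNReal.ofReal_le_ofReal hdxy
end
end

section
/- For every z > 0, every n ∈ ℕ and every x ∈ ℤ^d: Σ_{T ∈ 𝕋_L(o), x ∈ T_n} W_z(T) = Σ_{ω} W_z(ω) · Σ_{(R₀,…,R_n)} Π_{i=0}^{n} W_z(R_i), where the outer sum on the right is over n-step walk paths ω = (ω₀,…,ω_n) in ℤ^d with ω₀ = o, ω_n = x and ‖ω_i − ω_{i−1}‖_∞ ≤ L for each i, the inner sum is over (n+1)-tuples with R_i ∈ 𝕋_L(ω_i) for each i and the R_i having pairwise disjoint vertex sets, and W_z(ω) := z^n · Π_{i=1}^{n} D(ω_i − ω_{i−1}); both sides are sums of nonnegative terms with values in [0,∞]. Moreover, the map T ↦ (w(n,x), (R₀,…,R_n)),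 where R_i is the connected component of ω_i in T after the edges of the backbone path w(n,x) are removed, is a bijection from {T ∈ 𝕋_L(o) : x ∈ T_n} onto the set of such pairs (ω,(R_i)) with the R_i pairwise vertex-disjoint, and under it W_z(T) = W_z(ω)·Π_i W_z(R_i). -/
open scoped BigOperators ENNReal

noncomputable section

namespace LatticeTreePaper

/-- The canonical embedding of `ℤ^d` into Euclidean space `ℝ^d`. -/
def toE {d : ℕ} (x : ZLat d) : EuclideanSpace ℝ (Fin d) := WithLp.toLp 2 (fun i => ((x i : ℝ)))

/-- A path in the edge set `E` from `u` to `v`: a duplicate-free list of vertices starting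
at `u`, ending at `v`, with consecutive vertices joined by edges of `E`. -/
def IsTreePath {d : ℕ} (E : Set (Sym2 (ZLat d))) (u v : ZLat d) (p : List (ZLat d)) : Prop :=
  p.Nodup ∧ p.head? = some u ∧ p.getLast? = some v ∧ p.Chain' (fun a b => s(a, b) ∈ E)

/-- A lattice tree in `ℤ^d`: a finite simple graph on lattice vertices, connected and
cycle-free (equivalently, with a unique path between any two of its vertices). -/
structure LTree (d : ℕ) where
  V : Finset (ZLat d)
  E : Finset (Sym2 (ZLat d))
  edge_sub : ∀ e ∈ E, ∀ v ∈ e, v ∈ V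
  loopless : ∀ e ∈ E, ¬ e.IsDiag
  unique_path : ∀ u ∈ V, ∀ v ∈ V,
    ∃! p : List (ZLat d), IsTreePath (E : Set (Sym2 (ZLat d))) u v p

/-- The generation-`n` vertices `T_n` of a lattice tree: vertices at tree distance `n`
from the origin. -/
def gen {d : ℕ} (T : LTree d) (n : ℕ) : Set (ZLat d) :=
  {x | x ∈ T.V ∧ ∃ p : List (ZLat d),
    IsTreePath (T.E : Set (Sym2 (ZLat d))) 0 x p ∧ p.length = n + 1}

/-- `𝕋_L(x)`: the lattice trees containing the vertex `x` all of whose edges have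
`L∞`-length at most `L`. -/
def TLset {d : ℕ} (L : ℕ) (x : ZLat d) : Set (LTree d) :=
  {T | x ∈ T.V ∧ ∀ a b : ZLat d, s(a, b) ∈ T.E → ∀ i, (a i - b i).natAbs ≤ L}

/-- The uniform step distribution `D` on `([−L,L]^d ∩ ℤ^d) \ {o}`. -/
def Dunif (d L : ℕ) (x : ZLat d) : ℝ :=
  if x ≠ 0 ∧ ∀ i, (x i).natAbs ≤ L then (((2 * L + 1) ^ d - 1 : ℕ) : ℝ)⁻¹ else 0

lemma Dunif_neg (d L : ℕ) (x : ZLat d) : Dunif d L (-x) = Dunif d L x := by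
  simp [Dunif, neg_ne_zero, Pi.neg_apply, Int.natAbs_neg]

/-- The weight `D(u − v)` of an (unordered) edge. -/
def edgeWeight (d L : ℕ) : Sym2 (ZLat d) → ℝ :=
  Sym2.lift ⟨fun a b => Dunif d L (a - b), fun a b => by
    show Dunif d L (a - b) = Dunif d L (b - a)
    rw [show a - b = -(b - a) by ring, Dunif_neg]⟩

/-- The weight `W_z(T) = z^{|E(T)|} · ∏_{e ∈ E(T)} D(e)` of a lattice tree. -/
def W {d : ℕ} (L : ℕ) (z : ℝ) (T : LTree d) : ℝ :=
  z ^ T.E.card * ∏ e ∈ T.E, edgeWeight d L e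

/-- `ρ_z = Σ_{T ∈ 𝕋_L(o)} W_z(T)`, as a sum of nonnegative terms in `[0,∞]`. -/
def rho (d L : ℕ) (z : ℝ) : ℝ≥0∞ :=
  ∑' T : (TLset (d := d) L 0), ENNReal.ofReal (W L z (T : LTree d))

/-- The law of the random lattice tree: `Pr(A) = ρ_z⁻¹ Σ_{T ∈ 𝕋_L(o) ∩ A} W_z(T)`. -/
def Pr (d L : ℕ) (z : ℝ) (A : Set (LTree d)) : ℝ≥0∞ :=
  (∑' T : (TLset (d := d) L 0 ∩ A : Set (LTree d)), ENNReal.ofReal (W L z (T : LTree d)))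
    / rho d L z


/-- The weight `W_z(ω) = z^n · ∏ D(ω_{i+1} − ω_i)` of an `n`-step walk path. -/
def Wwalk (d L : ℕ) (z : ℝ) (n : ℕ) (ω : Fin (n + 1) → ZLat d) : ℝ :=
  z ^ n * ∏ i : Fin n, Dunif d L (ω i.succ - ω i.castSucc)

section Aux
open scoped Classical

section Infra
open SimpleGraph

variable {V : Type*}

/-- The simple graph generated by a set of (non-diagonal) unordered pairs. -/
def Gr (E : Set (Sym2 V)) : SimpleGraph V where
  Adj a b := a ≠ b ∧ s(a, b) ∈ E
  symm := ⟨fun a b ⟨h1, h2⟩ => ⟨h1.symm, by rwa [Sym2.eq_swap]⟩⟩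
  loopless := ⟨fun a h => h.1 rfl⟩

lemma gr_adj {E : Set (Sym2 V)} {a b : V} : (Gr E).Adj a b ↔ a ≠ b ∧ s(a, b) ∈ E := Iff.rfl

lemma gr_mono {E F : Set (Sym2 V)} (h : E ⊆ F) : Gr E ≤ Gr F :=
  fun _ _ hab => ⟨hab.1, h hab.2⟩

/-- Turn a nonempty list whose consecutive entries are adjacent into a walk. -/
def ofChain {G : SimpleGraph V} :
    ∀ (p : List V) (_ : List.Chain' G.Adj p) (h : p ≠ []), G.Walk (p.head h) (p.getLast h)
  | [a], _, _ => Walk.nil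
  | a :: b :: q, hc, _ => by
    have h1 : G.Adj a b := (List.isChain_cons_cons.mp hc).1
    have h2 := ofChain (b :: q) (List.isChain_cons_cons.mp hc).2 (by simp)
    have : (b :: q).getLast (by simp) = (a :: b :: q).getLast (by simp) :=
      (List.getLast_cons (by simp)).symm
    exact Walk.cons h1 (this ▸ h2)

@[simp] lemma support_ofChain {G : SimpleGraph V} :
    ∀ (p : List V) (hc : List.Chain' G.Adj p) (h : p ≠ []),
      (ofChain p hc h).support = p
  | [a], _, _ => rfl
  | a :: b :: q, hc, _ => by
    rw [ofChain]
    generalize_proofs _ _ _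
    exact congrArg (List.cons a) (support_ofChain (b :: q) (List.isChain_cons_cons.mp hc).2 (by simp))

lemma walk_eq_of_support_eq {G : SimpleGraph V} {u v : V} (w1 : G.Walk u v) :
    ∀ w2 : G.Walk u v, w1.support = w2.support → w1 = w2 := by
  induction w1 with
  | nil =>
    intro w2 h
    cases w2 with
    | nil => rfl
    | cons h' p =>
      exfalso
      have := congrArg List.length h
      simp [Walk.length_support] at this
  | @cons a b c h' p ih =>
    intro w2 hsup
    cases w2 with
    | nil =>
      exfalso
      have := congrArg List.length hsup
      simp [Walk.length_support] at this
    | @cons _ b' _ h2 p2 =>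
      rw [Walk.support_cons, Walk.support_cons] at hsup
      have htail : p.support = p2.support := List.tail_eq_of_cons_eq hsup
      have hbb : b = b' := by
        have h1 := p.support_eq_cons
        have h2 := p2.support_eq_cons
        rw [h1, h2] at htail
        exact List.head_eq_of_cons_eq htail
      subst hbb
      have htail2 : p.support = p2.support := List.tail_eq_of_cons_eq hsup
      rw [ih p2 htail2]

lemma chain'_and {R S : V → V → Prop} :
    ∀ {l : List V}, l.Chain' R → l.Chain' S → l.Chain' (fun a b => R a b ∧ S a b)
  | [], _, _ => List.isChain_nil
  | [_], _, _ => by simp [List.Chain']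
  | a :: b :: q, hR, hS => by
    simp only [List.Chain', List.isChain_cons_cons] at *
    exact ⟨⟨hR.1, hS.1⟩, chain'_and hR.2 hS.2⟩

lemma chain'_mem_edges {G : SimpleGraph V} {u v : V} (w : G.Walk u v) :
    w.support.Chain' (fun a b => s(a, b) ∈ w.edges) := by
  induction w with
  | nil => simp [List.Chain']
  | @cons a b c h p ih =>
    rw [Walk.support_cons, Walk.edges_cons, p.support_eq_cons]
    simp only [List.Chain', List.isChain_cons_cons]
    refine ⟨List.mem_cons_self, ?_⟩
    rw [← p.support_eq_cons]
    exact ih.imp fun _ _ h' => List.mem_cons_of_mem _ h'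

/-- closure property: a set of vertices closed under the edges of `E` contains every
vertex reachable from one of its members. -/
lemma reach_mem {E : Set (Sym2 V)} {W : Set V}
    (hW : ∀ e ∈ E, (∃ x ∈ e, x ∈ W) → ∀ x ∈ e, x ∈ W) :
    ∀ {a v : V}, (Gr E).Reachable a v → a ∈ W → v ∈ W := by
  intro a v h ha
  obtain ⟨w⟩ := h
  induction w with
  | nil => exact ha
  | @cons a b c h p ih =>
    exact ih (hW _ h.2 ⟨a, Sym2.mem_mk_left _ _, ha⟩ b (Sym2.mem_mk_right _ _))

/-- A walk from inside `S` to outside `S` crosses the cut. -/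
lemma exists_cross {G : SimpleGraph V} (S : Set V) :
    ∀ {u v : V}, G.Walk u v → u ∈ S → v ∉ S →
      ∃ a b, G.Adj a b ∧ a ∈ S ∧ b ∉ S := by
  intro u v w
  induction w with
  | nil => intro h1 h2; exact absurd h1 h2
  | @cons a b c h p ih =>
    intro h1 h2
    by_cases hb : b ∈ S
    · exact ih hb h2
    · exact ⟨a, b, h, h1, hb⟩

lemma mem_support_reachable {G : SimpleGraph V} {u v a : V} (w : G.Walk u v)
    (ha : a ∈ w.support) : G.Reachable u a := by
  classical
  exact ⟨w.takeUntil a ha⟩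

section TreePathWalk

variable {d : ℕ}

lemma isTreePath_to_walk {E : Finset (Sym2 (ZLat d))} (hE : ∀ e ∈ E, ¬ e.IsDiag)
    {u v : ZLat d} {p : List (ZLat d)}
    (hp : IsTreePath (E : Set (Sym2 (ZLat d))) u v p) :
    ∃ w : (Gr (E : Set (Sym2 (ZLat d)))).Walk u v, w.IsPath ∧ w.support = p := by
  obtain ⟨hnd, hh, hl, hc⟩ := hp
  have hne : p ≠ [] := by rintro rfl; simp at hh
  have hadj : p.Chain' (Gr (E : Set (Sym2 (ZLat d)))).Adj := by
    have h1 : p.Chain' (· ≠ ·) := List.Pairwise.isChain hnd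
    exact (chain'_and h1 hc).imp fun _ _ h => ⟨h.1, h.2⟩
  have hu : p.head hne = u := by
    rw [List.head?_eq_head hne] at hh; exact Option.some_injective _ hh
  have hv : p.getLast hne = v := by
    rw [List.getLast?_eq_getLast hne] at hl; exact Option.some_injective _ hl
  refine ⟨(ofChain p hadj hne).copy hu hv, ?_, ?_⟩
  · rw [Walk.isPath_def, Walk.support_copy, support_ofChain]; exact hnd
  · rw [Walk.support_copy, support_ofChain]

lemma walk_to_isTreePath {E : Finset (Sym2 (ZLat d))} {u v : ZLat d}
    (w : (Gr (E : Set (Sym2 (ZLat d)))).Walk u v) (hw : w.IsPath) :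
    IsTreePath (E : Set (Sym2 (ZLat d))) u v w.support := by
  refine ⟨hw.support_nodup, ?_, ?_, ?_⟩
  · rw [w.support_eq_cons]; rfl
  · have := w.support_ne_nil
    rw [List.getLast?_eq_getLast this]
    exact congrArg some (w.getLast_support)
  · exact w.isChain_adj_support.imp fun _ _ h => h.2

end TreePathWalk


end Infra


section Core
open SimpleGraph

variable {d : ℕ}

lemma chain'_pred {P : V → Prop} :
    ∀ {l : List V}, (∀ a ∈ l, P a) → l.Chain' (fun a b => P a ∧ P b)
  | [], _ => List.isChain_nil
  | [_], _ => by simp [List.Chain']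
  | a :: b :: q, h => by
    simp only [List.Chain', List.isChain_cons_cons]
    exact ⟨⟨h a (by simp), h b (by simp)⟩, chain'_pred fun x hx => h x (by simp [hx])⟩

end Core

section Core2
open SimpleGraph
variable {d : ℕ}

lemma LTree.ext' {T1 T2 : LTree d} (hV : T1.V = T2.V) (hE : T1.E = T2.E) : T1 = T2 := by
  cases T1; cases T2; simp_all

lemma support_subset {E : Set (Sym2 (ZLat d))} {W : Finset (ZLat d)}
    (hsub : ∀ e ∈ E, ∀ x ∈ e, x ∈ W) {u v : ZLat d} (w : (Gr E).Walk u v) :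
    u ∈ W → ∀ a ∈ w.support, a ∈ W := by
  induction w with
  | nil =>
    intro hu a ha
    rw [Walk.support_nil, List.mem_singleton] at ha
    exact ha ▸ hu
  | @cons a b c h p ih =>
    intro hu x hx
    rw [Walk.support_cons, List.mem_cons] at hx
    rcases hx with rfl | hx
    · exact hu
    · exact ih (hsub _ h.2 b (Sym2.mem_mk_right _ _)) x hx

/-- The backbone edges of a walk `ω`. -/
def bbE (n : ℕ) (ω : Fin (n + 1) → ZLat d) : Finset (Sym2 (ZLat d)) :=
  Finset.univ.image fun i : Fin n => s(ω i.castSucc, ω i.succ)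

lemma mem_bbE {n : ℕ} {ω : Fin (n + 1) → ZLat d} {e : Sym2 (ZLat d)} :
    e ∈ bbE n ω ↔ ∃ i : Fin n, e = s(ω i.castSucc, ω i.succ) := by
  simp [bbE, eq_comm]

/-- The graph of `T` with the backbone edges removed. -/
def ribG (T : LTree d) (n : ℕ) (ω : Fin (n + 1) → ZLat d) : SimpleGraph (ZLat d) :=
  Gr ((T.E \ bbE n ω : Finset (Sym2 (ZLat d))) : Set (Sym2 (ZLat d)))

/-- Vertex set of the `i`-th rib. -/
def ribV (T : LTree d) (n : ℕ) (ω : Fin (n + 1) → ZLat d) (i : Fin (n + 1)) :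
    Finset (ZLat d) :=
  T.V.filter fun v => (ribG T n ω).Reachable (ω i) v

/-- Edge set of the `i`-th rib. -/
def ribE (T : LTree d) (n : ℕ) (ω : Fin (n + 1) → ZLat d) (i : Fin (n + 1)) :
    Finset (Sym2 (ZLat d)) :=
  (T.E \ bbE n ω).filter fun e => ∀ x ∈ e, x ∈ ribV T n ω i

lemma mem_ribV {T : LTree d} {n : ℕ} {ω : Fin (n + 1) → ZLat d} {i : Fin (n + 1)}
    {v : ZLat d} :
    v ∈ ribV T n ω i ↔ v ∈ T.V ∧ (ribG T n ω).Reachable (ω i) v := Finset.mem_filter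

lemma ribV_closed (T : LTree d) (n : ℕ) (ω : Fin (n + 1) → ZLat d) (i : Fin (n + 1)) :
    ∀ e ∈ ((T.E \ bbE n ω : Finset (Sym2 (ZLat d))) : Set (Sym2 (ZLat d))),
      (∃ x ∈ e, x ∈ ((ribV T n ω i : Finset (ZLat d)) : Set (ZLat d))) →
      ∀ x ∈ e, x ∈ ((ribV T n ω i : Finset (ZLat d)) : Set (ZLat d)) := by
  intro e
  induction e using Sym2.ind with
  | _ a b =>
    intro he hex x hx
    rw [Finset.mem_coe, Finset.mem_sdiff] at he
    have hne : a ≠ b := by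
      intro h
      exact T.loopless _ he.1 (by rw [Sym2.mk_isDiag_iff]; exact h)
    have hadj : (ribG T n ω).Adj a b :=
      ⟨hne, by rw [Finset.mem_coe, Finset.mem_sdiff]; exact he⟩
    have key : a ∈ ribV T n ω i → b ∈ ribV T n ω i := by
      intro ha
      rw [mem_ribV] at ha ⊢
      exact ⟨T.edge_sub _ he.1 b (Sym2.mem_mk_right _ _), ha.2.trans ⟨hadj.toWalk⟩⟩
    have key' : b ∈ ribV T n ω i → a ∈ ribV T n ω i := by
      intro hb
      rw [mem_ribV] at hb ⊢
      exact ⟨T.edge_sub _ he.1 a (Sym2.mem_mk_left _ _), hb.2.trans ⟨hadj.symm.toWalk⟩⟩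
    obtain ⟨y, hy, hy2⟩ := hex
    rw [Sym2.mem_iff] at hy hx
    rw [Finset.mem_coe] at hy2 ⊢
    rcases hx with rfl | rfl <;> rcases hy with rfl | rfl
    · exact hy2
    · exact key' hy2
    · exact key hy2
    · exact hy2

lemma ribE_subset {T : LTree d} {n : ℕ} {ω : Fin (n + 1) → ZLat d} {i : Fin (n + 1)} :
    ribE T n ω i ⊆ T.E := fun e he =>
  (Finset.mem_sdiff.mp (Finset.mem_filter.mp he).1).1

/-- The `i`-th rib, as a lattice tree. -/
def ribTree (T : LTree d) (n : ℕ) (ω : Fin (n + 1) → ZLat d) (i : Fin (n + 1)) :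
    LTree d where
  V := ribV T n ω i
  E := ribE T n ω i
  edge_sub := fun e he x hx => (Finset.mem_filter.mp he).2 x hx
  loopless := fun e he => T.loopless e (ribE_subset he)
  unique_path := by
    intro u hu v hv
    have hu' := mem_ribV.mp hu
    have hv' := mem_ribV.mp hv
    obtain ⟨w⟩ := hu'.2.symm.trans hv'.2
    set q := (w.toPath : (ribG T n ω).Walk u v) with hq
    have hqsup : ∀ a ∈ q.support, a ∈ ribV T n ω i := by
      intro a ha
      have h1 : (ribG T n ω).Reachable u a := mem_support_reachable _ ha
      exact Finset.mem_coe.mp (reach_mem (ribV_closed T n ω i) h1 (Finset.mem_coe.mpr hu))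
    have hlift : ∀ {r : List (ZLat d)},
        IsTreePath ((ribE T n ω i : Finset (Sym2 (ZLat d))) : Set (Sym2 (ZLat d))) u v r →
        IsTreePath ((T.E : Finset (Sym2 (ZLat d))) : Set (Sym2 (ZLat d))) u v r := by
      rintro r ⟨h1, h2, h3, h4⟩
      exact ⟨h1, h2, h3, h4.imp fun _ _ hm => ribE_subset hm⟩
    have hmain : IsTreePath ((ribE T n ω i : Finset (Sym2 (ZLat d))) : Set (Sym2 (ZLat d)))
        u v q.support := by
      have hbase := walk_to_isTreePath (E := T.E \ bbE n ω) q w.toPath.2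
      refine ⟨hbase.1, hbase.2.1, hbase.2.2.1, ?_⟩
      have hc := chain'_and hbase.2.2.2 (chain'_pred hqsup)
      refine hc.imp fun a b hm => ?_
      refine Finset.mem_coe.mpr (Finset.mem_filter.mpr ⟨Finset.mem_coe.mp hm.1, ?_⟩)
      intro x hx
      rw [Sym2.mem_iff] at hx
      rcases hx with rfl | rfl
      · exact hm.2.1
      · exact hm.2.2
    refine ⟨q.support, hmain, ?_⟩
    intro r hr
    exact (T.unique_path u hu'.1 v hv'.1).unique (hlift hr) (hlift hmain)

end Core2



section Glue
open SimpleGraph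

lemma reach_subset_of_closed {V : Type*} {H : SimpleGraph V} {S : Set V}
    (hS : ∀ a b, H.Adj a b → a ∈ S → b ∈ S) {u v : V}
    (h : H.Reachable u v) (hu : u ∈ S) : v ∈ S := by
  obtain ⟨w⟩ := h
  induction w with
  | nil => exact hu
  | @cons a b c h p ih => exact ih (hS a b h hu)

variable {d n : ℕ} {ω : Fin (n + 1) → ZLat d} {R : Fin (n + 1) → LTree d}

/-- Vertex set of the tree glued from backbone `ω` and ribs `R`. -/
def gluedV (n : ℕ) (R : Fin (n + 1) → LTree d) : Finset (ZLat d) :=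
  Finset.univ.biUnion fun i => (R i).V

/-- Edge set of the tree glued from backbone `ω` and ribs `R`. -/
def gluedE (n : ℕ) (ω : Fin (n + 1) → ZLat d) (R : Fin (n + 1) → LTree d) :
    Finset (Sym2 (ZLat d)) :=
  bbE n ω ∪ Finset.univ.biUnion fun i => (R i).E

lemma mem_gluedV {v : ZLat d} : v ∈ gluedV n R ↔ ∃ i, v ∈ (R i).V := by simp [gluedV]

lemma mem_gluedE {e : Sym2 (ZLat d)} :
    e ∈ gluedE n ω R ↔ e ∈ bbE n ω ∨ ∃ i, e ∈ (R i).E := by simp [gluedE]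

variable (hdisj : ∀ i j, i ≠ j →
  Disjoint (((R i).V : Finset (ZLat d)) : Set (ZLat d)) (((R j).V : Finset (ZLat d)) : Set (ZLat d)))

section WithDisj
include hdisj

lemma rib_index_unique {v : ZLat d} {i j : Fin (n + 1)}
    (hi : v ∈ (R i).V) (hj : v ∈ (R j).V) : i = j := by
  by_contra h
  exact Set.disjoint_left.mp (hdisj i j h) (Finset.mem_coe.mpr hi) (Finset.mem_coe.mpr hj)

variable (hmem : ∀ i, ω i ∈ (R i).V)
include hmem

lemma omega_inj : Function.Injective ω := by
  intro i j h
  exact rib_index_unique hdisj (hmem i) (h ▸ hmem j)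

lemma glued_loopless : ∀ e ∈ gluedE n ω R, ¬ e.IsDiag := by
  intro e he
  rcases mem_gluedE.mp he with hb | ⟨i, hi⟩
  · obtain ⟨k, rfl⟩ := mem_bbE.mp hb
    rw [Sym2.mk_isDiag_iff]
    intro h
    exact (Fin.castSucc_lt_succ (i := k)).ne (omega_inj hdisj hmem h)
  · exact (R i).loopless e hi

lemma glued_edge_sub : ∀ e ∈ gluedE n ω R, ∀ v ∈ e, v ∈ gluedV n R := by
  intro e he v hv
  rcases mem_gluedE.mp he with hb | ⟨i, hi⟩
  · obtain ⟨k, rfl⟩ := mem_bbE.mp hb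
    rw [Sym2.mem_iff] at hv
    rcases hv with rfl | rfl
    · exact mem_gluedV.mpr ⟨k.castSucc, hmem _⟩
    · exact mem_gluedV.mpr ⟨k.succ, hmem _⟩
  · exact mem_gluedV.mpr ⟨i, (R i).edge_sub e hi v hv⟩

end WithDisj

lemma reach_in_rib (i : Fin (n + 1)) {u v : ZLat d}
    (hu : u ∈ (R i).V) (hv : v ∈ (R i).V) :
    (Gr (((R i).E : Finset (Sym2 (ZLat d))) : Set (Sym2 (ZLat d)))).Reachable u v := by
  obtain ⟨p, hp, -⟩ := (R i).unique_path u hu v hv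
  obtain ⟨w, -, -⟩ := isTreePath_to_walk (R i).loopless hp
  exact ⟨w⟩

lemma ribE_sub_glued (i : Fin (n + 1)) :
    (((R i).E : Finset (Sym2 (ZLat d))) : Set (Sym2 (ZLat d))) ⊆
      ((gluedE n ω R : Finset (Sym2 (ZLat d))) : Set (Sym2 (ZLat d))) := by
  intro e he
  exact Finset.mem_coe.mpr (mem_gluedE.mpr (Or.inr ⟨i, Finset.mem_coe.mp he⟩))

section WithBoth
variable (hmem : ∀ i, ω i ∈ (R i).V)
include hmem hdisj

lemma glued_bb_adj (k : Fin n) :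
    (Gr ((gluedE n ω R : Finset (Sym2 (ZLat d))) : Set (Sym2 (ZLat d)))).Adj
      (ω k.castSucc) (ω k.succ) := by
  refine ⟨fun h => (Fin.castSucc_lt_succ (i := k)).ne (omega_inj hdisj hmem h), ?_⟩
  exact Finset.mem_coe.mpr (mem_gluedE.mpr (Or.inl (mem_bbE.mpr ⟨k, rfl⟩)))

lemma glued_reach_omega (k : Fin (n + 1)) :
    (Gr ((gluedE n ω R : Finset (Sym2 (ZLat d))) : Set (Sym2 (ZLat d)))).Reachable
      (ω 0) (ω k) := by
  induction k using Fin.induction with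
  | zero => exact Reachable.refl _
  | succ m ih => exact ih.trans ⟨Walk.cons (glued_bb_adj hdisj hmem m) Walk.nil⟩

lemma glued_reach {u v : ZLat d} {i j : Fin (n + 1)}
    (hu : u ∈ (R i).V) (hv : v ∈ (R j).V) :
    (Gr ((gluedE n ω R : Finset (Sym2 (ZLat d))) : Set (Sym2 (ZLat d)))).Reachable u v := by
  have h1 := (reach_in_rib i (hmem i) hu).mono (gr_mono (ribE_sub_glued (ω := ω) i))
  have h2 := (reach_in_rib j (hmem j) hv).mono (gr_mono (ribE_sub_glued (ω := ω) j))
  exact h1.symm.trans (((glued_reach_omega hdisj hmem i).symm.trans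
    (glued_reach_omega hdisj hmem j)).trans h2)

lemma glued_bb_bridge (k : Fin n) :
    ¬ ((Gr ((gluedE n ω R : Finset (Sym2 (ZLat d))) : Set (Sym2 (ZLat d)))) \
        fromEdgeSet {s(ω k.castSucc, ω k.succ)}).Reachable (ω k.castSucc) (ω k.succ) := by
  set S : Set (ZLat d) := {v | ∃ j : Fin (n + 1), (j : ℕ) ≤ (k : ℕ) ∧ v ∈ (R j).V} with hS
  intro hreach
  have hv : ω k.succ ∉ S := by
    rintro ⟨j, hj, hjv⟩
    have hjk := rib_index_unique hdisj hjv (hmem k.succ)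
    subst hjk
    rw [Fin.val_succ] at hj
    omega
  apply hv
  refine reach_subset_of_closed ?_ hreach
    ⟨k.castSucc, by simp [Fin.coe_castSucc], hmem k.castSucc⟩
  intro a b hab haS
  rw [SimpleGraph.sdiff_adj, fromEdgeSet_adj] at hab
  have hne : s(a, b) ≠ s(ω k.castSucc, ω k.succ) := by
    intro h
    exact hab.2 ⟨by simp [h], hab.1.ne⟩
  obtain ⟨j, hj, hjv⟩ := haS
  rcases mem_gluedE.mp (Finset.mem_coe.mp hab.1.2) with hb | ⟨m, hm⟩
  · obtain ⟨m, hmeq⟩ := mem_bbE.mp hb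
    rcases Sym2.eq_iff.mp hmeq with ⟨ha', hb'⟩ | ⟨ha', hb'⟩
    · -- a = ω m.castSucc, b = ω m.succ
      have hji : j = m.castSucc := rib_index_unique hdisj hjv (ha' ▸ hmem m.castSucc)
      have hmk : m ≠ k := by
        intro h
        rw [h] at hmeq
        exact hne hmeq
      have : (m : ℕ) + 1 ≤ (k : ℕ) := by
        have h2 := hji ▸ hj
        rw [Fin.coe_castSucc] at h2
        have h3 : (m : ℕ) ≠ (k : ℕ) := fun h => hmk (Fin.ext h)
        omega
      exact ⟨m.succ, by simpa [Fin.val_succ] using this, hb' ▸ hmem m.succ⟩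
    · -- a = ω m.succ, b = ω m.castSucc
      have hji : j = m.succ := rib_index_unique hdisj hjv (ha' ▸ hmem m.succ)
      have : (m : ℕ) ≤ (k : ℕ) := by
        have h2 := hji ▸ hj
        rw [Fin.val_succ] at h2
        omega
      exact ⟨m.castSucc, by simpa [Fin.coe_castSucc] using this, hb' ▸ hmem m.castSucc⟩
  · have haj : a ∈ (R m).V := (R m).edge_sub _ hm a (Sym2.mem_mk_left _ _)
    have : j = m := rib_index_unique hdisj hjv haj
    exact ⟨m, this ▸ hj, (R m).edge_sub _ hm b (Sym2.mem_mk_right _ _)⟩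

lemma glued_rib_bridge {i : Fin (n + 1)} {a b : ZLat d}
    (hab : s(a, b) ∈ (R i).E) (hne : a ≠ b) :
    ¬ ((Gr ((gluedE n ω R : Finset (Sym2 (ZLat d))) : Set (Sym2 (ZLat d)))) \
        fromEdgeSet {s(a, b)}).Reachable a b := by
  classical
  set SA : Set (ZLat d) :=
    {v | (Gr (((R i).E.erase s(a, b) : Finset (Sym2 (ZLat d))) : Set (Sym2 (ZLat d)))).Reachable a v} with hSA
  have haV : a ∈ (R i).V := (R i).edge_sub _ hab a (Sym2.mem_mk_left _ _)
  have hbV : b ∈ (R i).V := (R i).edge_sub _ hab b (Sym2.mem_mk_right _ _)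
  have hSA_sub : SA ⊆ (((R i).V : Finset (ZLat d)) : Set (ZLat d)) := by
    intro v hv
    refine reach_mem (W := (((R i).V : Finset (ZLat d)) : Set (ZLat d))) ?_ hv
      (Finset.mem_coe.mpr haV)
    intro e he _ x hx
    exact Finset.mem_coe.mpr
      ((R i).edge_sub e (Finset.erase_subset _ _ (Finset.mem_coe.mp he)) x hx)
  have hbSA : b ∉ SA := by
    rintro ⟨w⟩
    set q := (w.toPath : (Gr (((R i).E.erase s(a, b) : Finset (Sym2 (ZLat d))) : Set (Sym2 (ZLat d)))).Walk a b) with hqdef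
    have h1 : IsTreePath (((R i).E : Finset (Sym2 (ZLat d))) : Set (Sym2 (ZLat d))) a b q.support := by
      have hbase := walk_to_isTreePath q w.toPath.2
      exact ⟨hbase.1, hbase.2.1, hbase.2.2.1, hbase.2.2.2.imp fun _ _ hm =>
        Finset.mem_coe.mpr (Finset.erase_subset _ _ (Finset.mem_coe.mp hm))⟩
    have h2 : IsTreePath (((R i).E : Finset (Sym2 (ZLat d))) : Set (Sym2 (ZLat d))) a b [a, b] := by
      refine ⟨by simp [hne], rfl, by simp, ?_⟩
      simp only [List.Chain', List.isChain_pair]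
      exact Finset.mem_coe.mpr hab
    have hsupp : q.support = [a, b] :=
      ((R i).unique_path a haV b hbV).unique h1 h2
    have hch := chain'_mem_edges q
    rw [hsupp] at hch
    simp only [List.Chain', List.isChain_pair] at hch
    have := q.edges_subset_edgeSet hch
    rw [mem_edgeSet] at this
    exact (Finset.notMem_erase _ _) (Finset.mem_coe.mp this.2)
  intro hreach
  set S : Set (ZLat d) := SA ∪ {v | ω i ∈ SA ∧ ∃ j, j ≠ i ∧ v ∈ (R j).V} with hSdef
  have hbS : b ∉ S := by
    rintro (hb | ⟨-, j, hji, hbj⟩)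
    · exact hbSA hb
    · exact hji (rib_index_unique hdisj hbj hbV)
  apply hbS
  refine reach_subset_of_closed ?_ hreach (Or.inl (Reachable.refl a))
  intro a' b' hadj ha'
  rw [SimpleGraph.sdiff_adj, fromEdgeSet_adj] at hadj
  have hne' : s(a', b') ≠ s(a, b) := by
    intro h
    exact hadj.2 ⟨by simp [h], hadj.1.ne⟩
  rcases mem_gluedE.mp (Finset.mem_coe.mp hadj.1.2) with hbb | ⟨m, hm⟩
  · -- backbone edge: endpoints are backbone vertices
    obtain ⟨m, hmeq⟩ := mem_bbE.mp hbb
    have : ∃ k1 k2 : Fin (n + 1), k1 ≠ k2 ∧ a' = ω k1 ∧ b' = ω k2 := by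
      rcases Sym2.eq_iff.mp hmeq with ⟨h1, h2⟩ | ⟨h1, h2⟩
      · exact ⟨m.castSucc, m.succ, (Fin.castSucc_lt_succ (i := m)).ne, h1, h2⟩
      · exact ⟨m.succ, m.castSucc, (Fin.castSucc_lt_succ (i := m)).ne', h1, h2⟩
    obtain ⟨k1, k2, hk12, rfl, rfl⟩ := this
    by_cases hk1 : k1 = i
    · subst hk1
      have hωiSA : ω k1 ∈ SA := by
        rcases ha' with h | ⟨-, j, hji, hj⟩
        · exact h
        · exact absurd (rib_index_unique hdisj hj (hmem k1)) hji
      exact Or.inr ⟨hωiSA, k2, fun h => hk12 (h ▸ rfl), hmem k2⟩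
    · have hωi : ω i ∈ SA := by
        rcases ha' with h | ⟨h, -⟩
        · exact absurd (rib_index_unique hdisj (Finset.mem_coe.mp (hSA_sub h)) (hmem k1)).symm hk1
        · exact h
      by_cases hk2 : k2 = i
      · subst hk2
        exact Or.inl hωi
      · exact Or.inr ⟨hωi, k2, hk2, hmem k2⟩
  · -- rib edge of rib m
    have ha'm : a' ∈ (R m).V := (R m).edge_sub _ hm a' (Sym2.mem_mk_left _ _)
    have hb'm : b' ∈ (R m).V := (R m).edge_sub _ hm b' (Sym2.mem_mk_right _ _)
    by_cases hmi : m = i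
    · subst hmi
      have ha'SA : a' ∈ SA := by
        rcases ha' with h | ⟨-, j, hji, hj⟩
        · exact h
        · exact absurd (rib_index_unique hdisj hj ha'm) hji
      refine Or.inl (ha'SA.trans ⟨Walk.cons ⟨hadj.1.ne, ?_⟩ Walk.nil⟩)
      exact Finset.mem_coe.mpr (Finset.mem_erase.mpr ⟨hne', hm⟩)
    · have hωi : ω i ∈ SA := by
        rcases ha' with h | ⟨h, -⟩
        · exact absurd (rib_index_unique hdisj (Finset.mem_coe.mp (hSA_sub h)) ha'm).symm hmi
        · exact h
      exact Or.inr ⟨hωi, m, hmi, hb'm⟩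

lemma glued_acyclic :
    (Gr ((gluedE n ω R : Finset (Sym2 (ZLat d))) : Set (Sym2 (ZLat d)))).IsAcyclic := by
  rw [isAcyclic_iff_forall_adj_isBridge]
  intro a b hadj
  rw [isBridge_iff]
  rcases mem_gluedE.mp (Finset.mem_coe.mp hadj.2) with hbb | ⟨m, hm⟩
  · obtain ⟨k, hkeq⟩ := mem_bbE.mp hbb
    rcases Sym2.eq_iff.mp hkeq with ⟨h1, h2⟩ | ⟨h1, h2⟩
    · subst h1; subst h2
      exact glued_bb_bridge hdisj hmem k
    · subst h1; subst h2
      intro h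
      have h2 : s(ω k.succ, ω k.castSucc) = s(ω k.castSucc, ω k.succ) := Sym2.eq_swap
      rw [h2] at h
      exact glued_bb_bridge hdisj hmem k h.symm
  · exact glued_rib_bridge hdisj hmem hm hadj.ne

/-- The lattice tree glued from backbone `ω` and mutually avoiding ribs `R`. -/
def gluedTree (hdisj : ∀ i j, i ≠ j →
      Disjoint (((R i).V : Finset (ZLat d)) : Set (ZLat d)) (((R j).V : Finset (ZLat d)) : Set (ZLat d)))
    (hmem : ∀ i, ω i ∈ (R i).V) : LTree d where
  V := gluedV n R
  E := gluedE n ω R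
  edge_sub := glued_edge_sub hdisj hmem
  loopless := glued_loopless hdisj hmem
  unique_path := by
    intro u hu v hv
    obtain ⟨i, hui⟩ := mem_gluedV.mp hu
    obtain ⟨j, hvj⟩ := mem_gluedV.mp hv
    obtain ⟨w⟩ := glued_reach hdisj hmem hui hvj
    set q := (w.toPath : (Gr ((gluedE n ω R : Finset (Sym2 (ZLat d))) : Set (Sym2 (ZLat d)))).Walk u v) with hqdef
    refine ⟨q.support, walk_to_isTreePath q w.toPath.2, ?_⟩
    intro r hr
    obtain ⟨w1, hw1, hw1s⟩ := isTreePath_to_walk (glued_loopless hdisj hmem) hr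
    obtain ⟨w2, hw2, hw2s⟩ :=
      isTreePath_to_walk (glued_loopless hdisj hmem) (walk_to_isTreePath q w.toPath.2)
    have : (⟨w1, hw1⟩ : (Gr ((gluedE n ω R : Finset (Sym2 (ZLat d))) : Set (Sym2 (ZLat d)))).Path u v) = ⟨w2, hw2⟩ :=
      (glued_acyclic hdisj hmem).path_unique _ _
    have hw : w1 = w2 := congrArg Subtype.val this
    rw [← hw1s, hw, hw2s]

end WithBoth
end Glue


section Decomp
open SimpleGraph

variable {d n : ℕ} {T : LTree d} {x : ZLat d} {p : List (ZLat d)}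

/-- The backbone function associated with a path list of length `n+1`. -/
def pathFun (p : List (ZLat d)) (hlen : p.length = n + 1) : Fin (n + 1) → ZLat d :=
  fun i => p[(i : ℕ)]'(by rw [hlen]; exact i.isLt)

lemma p_ne_nil (hlen : p.length = n + 1) : p ≠ [] := by
  intro h; rw [h] at hlen; simp at hlen

lemma pathFun_val (hlen : p.length = n + 1) (i : Fin (n + 1)) :
    pathFun p hlen i = p[(i : ℕ)]'(by rw [hlen]; exact i.isLt) := rfl

lemma pathFun_zero (hpath : IsTreePath ((T.E : Finset (Sym2 (ZLat d))) : Set (Sym2 (ZLat d))) 0 x p)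
    (hlen : p.length = n + 1) : pathFun p hlen 0 = 0 := by
  have h := hpath.2.1
  rw [List.head?_eq_head (p_ne_nil hlen)] at h
  have h2 : pathFun p hlen 0 = p.head (p_ne_nil hlen) := by
    rw [pathFun_val]
    exact List.getElem_zero _
  rw [h2]
  exact Option.some_injective _ h

lemma pathFun_last (hpath : IsTreePath ((T.E : Finset (Sym2 (ZLat d))) : Set (Sym2 (ZLat d))) 0 x p)
    (hlen : p.length = n + 1) : pathFun p hlen (Fin.last n) = x := by
  have h := hpath.2.2.1
  rw [List.getLast?_eq_getLast (p_ne_nil hlen)] at h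
  have hx := Option.some_injective _ h
  rw [← hx, pathFun_val, List.getLast_eq_getElem]
  congr 1
  rw [hlen]
  simp [Fin.val_last]

lemma pathFun_inj (hpath : IsTreePath ((T.E : Finset (Sym2 (ZLat d))) : Set (Sym2 (ZLat d))) 0 x p)
    (hlen : p.length = n + 1) : Function.Injective (pathFun p hlen) := by
  intro i j h
  have hinj := List.nodup_iff_injective_getElem.mp hpath.1
  have h3 := hinj (a₁ := ⟨(i : ℕ), by rw [hlen]; exact i.isLt⟩)
    (a₂ := ⟨(j : ℕ), by rw [hlen]; exact j.isLt⟩) h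
  have h4 : (i : ℕ) = (j : ℕ) := by simpa using h3
  exact Fin.ext h4

lemma bb_mem_T (hpath : IsTreePath ((T.E : Finset (Sym2 (ZLat d))) : Set (Sym2 (ZLat d))) 0 x p)
    (hlen : p.length = n + 1) : bbE n (pathFun p hlen) ⊆ T.E := by
  intro e he
  obtain ⟨k, rfl⟩ := mem_bbE.mp he
  have hc := List.isChain_iff_getElem.mp hpath.2.2.2 (k : ℕ) (by rw [hlen]; simpa using k.isLt)
  exact Finset.mem_coe.mp hc

lemma mem_V_of_mem_p (hpath : IsTreePath ((T.E : Finset (Sym2 (ZLat d))) : Set (Sym2 (ZLat d))) 0 x p)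
    (hlen : p.length = n + 1) (h0 : (0 : ZLat d) ∈ T.V) : ∀ a ∈ p, a ∈ T.V := by
  obtain ⟨w, hw, hs⟩ := isTreePath_to_walk T.loopless hpath
  intro a ha
  refine support_subset (W := T.V) ?_ w h0 a (by rw [hs]; exact ha)
  intro e he y hy
  exact T.edge_sub e (Finset.mem_coe.mp he) y hy

lemma pathFun_mem_V (hpath : IsTreePath ((T.E : Finset (Sym2 (ZLat d))) : Set (Sym2 (ZLat d))) 0 x p)
    (hlen : p.length = n + 1) (h0 : (0 : ZLat d) ∈ T.V) (i : Fin (n + 1)) :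
    pathFun p hlen i ∈ T.V :=
  mem_V_of_mem_p hpath hlen h0 _ (by rw [pathFun_val]; exact List.getElem_mem _)

lemma pathFun_mem_ribV (hpath : IsTreePath ((T.E : Finset (Sym2 (ZLat d))) : Set (Sym2 (ZLat d))) 0 x p)
    (hlen : p.length = n + 1) (h0 : (0 : ZLat d) ∈ T.V) (i : Fin (n + 1)) :
    pathFun p hlen i ∈ ribV T n (pathFun p hlen) i :=
  mem_ribV.mpr ⟨pathFun_mem_V hpath hlen h0 i, Reachable.refl _⟩

lemma ribV_disj_aux (hpath : IsTreePath ((T.E : Finset (Sym2 (ZLat d))) : Set (Sym2 (ZLat d))) 0 x p)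
    (hlen : p.length = n + 1) (h0 : (0 : ZLat d) ∈ T.V) {i j : Fin (n + 1)}
    (hij : (i : ℕ) < (j : ℕ)) {v : ZLat d}
    (hvi : v ∈ ribV T n (pathFun p hlen) i) (hvj : v ∈ ribV T n (pathFun p hlen) j) :
    False := by
  set ω := pathFun p hlen with hω
  have hri := (mem_ribV.mp hvi).2
  have hrj := (mem_ribV.mp hvj).2
  obtain ⟨w⟩ := hri.trans hrj.symm
  set q := (w.toPath : (ribG T n ω).Walk (ω i) (ω j)) with hqdef
  have hq : IsTreePath ((T.E : Finset (Sym2 (ZLat d))) : Set (Sym2 (ZLat d))) (ω i) (ω j)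
      q.support := by
    have hbase := walk_to_isTreePath q w.toPath.2
    exact ⟨hbase.1, hbase.2.1, hbase.2.2.1, hbase.2.2.2.imp fun _ _ hm =>
      Finset.mem_coe.mpr (Finset.mem_sdiff.mp (Finset.mem_coe.mp hm)).1⟩
  set m := (j : ℕ) - (i : ℕ) with hm
  set seg := (p.drop (i : ℕ)).take (m + 1) with hseg
  have hjlt : (j : ℕ) < p.length := by rw [hlen]; exact j.isLt
  have hdroplen : (p.drop (i : ℕ)).length = p.length - (i : ℕ) := List.length_drop
  have hseglen : seg.length = m + 1 := by
    rw [hseg, List.length_take, hdroplen]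
    omega
  have hget : ∀ (k : ℕ) (hk : k < m + 1), seg[k]'(by omega) = p[(i : ℕ) + k]'(by omega) := by
    intro k hk
    simp only [hseg, List.getElem_take, List.getElem_drop]
  have hseg_path : IsTreePath ((T.E : Finset (Sym2 (ZLat d))) : Set (Sym2 (ZLat d)))
      (ω i) (ω j) seg := by
    have hinf : seg <:+: p :=
      (List.take_prefix _ _).isInfix.trans (List.drop_suffix _ _).isInfix
    refine ⟨hpath.1.sublist hinf.sublist, ?_, ?_, hpath.2.2.2.infix hinf⟩
    · rw [List.head?_eq_getElem?, List.getElem?_eq_getElem (by omega)]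
      have h5 := hget 0 (by omega)
      simp only [Nat.add_zero] at h5
      rw [h5, hω, pathFun_val]
    · rw [List.getLast?_eq_getElem?, hseglen]
      simp only [Nat.add_sub_cancel]
      rw [List.getElem?_eq_getElem (by omega), hget m (by omega)]
      have him : (i : ℕ) + m = (j : ℕ) := by omega
      simp only [him, hω, pathFun_val]
  have hsup : q.support = seg :=
    (T.unique_path (ω i) (pathFun_mem_V hpath hlen h0 i) (ω j)
      (pathFun_mem_V hpath hlen h0 j)).unique hq hseg_path
  have hch := chain'_mem_edges q
  rw [hsup] at hch
  have hc2 := List.isChain_iff_getElem.mp hch 0 (by rw [hseglen]; omega)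
  simp only [Nat.zero_add] at hc2
  have hs0 : seg[0]'(by omega) = p[(i : ℕ)]'(by omega) := by
    have := hget 0 (by omega); simpa using this
  have hs1 : seg[1]'(by rw [hseglen]; omega) = p[(i : ℕ) + 1]'(by omega) := hget 1 (by omega)
  rw [hs0, hs1] at hc2
  have hedge := q.edges_subset_edgeSet hc2
  rw [mem_edgeSet] at hedge
  have hnotbb := (Finset.mem_sdiff.mp (Finset.mem_coe.mp hedge.2)).2
  apply hnotbb
  refine mem_bbE.mpr ⟨⟨(i : ℕ), by omega⟩, ?_⟩
  rw [hω]
  rfl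

lemma ribV_disj (hpath : IsTreePath ((T.E : Finset (Sym2 (ZLat d))) : Set (Sym2 (ZLat d))) 0 x p)
    (hlen : p.length = n + 1) (h0 : (0 : ZLat d) ∈ T.V) :
    ∀ i j, i ≠ j → Disjoint ((ribV T n (pathFun p hlen) i : Finset (ZLat d)) : Set (ZLat d))
      ((ribV T n (pathFun p hlen) j : Finset (ZLat d)) : Set (ZLat d)) := by
  intro i j hij
  rw [Set.disjoint_left]
  intro v hvi hvj
  rcases lt_trichotomy (i : ℕ) (j : ℕ) with h | h | h
  · exact ribV_disj_aux hpath hlen h0 h (Finset.mem_coe.mp hvi) (Finset.mem_coe.mp hvj)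
  · exact hij (Fin.ext h)
  · exact ribV_disj_aux hpath hlen h0 h (Finset.mem_coe.mp hvj) (Finset.mem_coe.mp hvi)

lemma exists_rib_aux (hpath : IsTreePath ((T.E : Finset (Sym2 (ZLat d))) : Set (Sym2 (ZLat d))) 0 x p)
    (hlen : p.length = n + 1) {u v : ZLat d}
    (w : (Gr ((T.E : Finset (Sym2 (ZLat d))) : Set (Sym2 (ZLat d)))).Walk u v) :
    (∃ i, v ∈ ribV T n (pathFun p hlen) i) → ∃ i, u ∈ ribV T n (pathFun p hlen) i := by
  induction w with
  | nil => exact id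
  | @cons a b c h pw ih =>
    intro hc
    obtain ⟨i, hb⟩ := ih hc
    have haV : a ∈ T.V := T.edge_sub _ (Finset.mem_coe.mp h.2) a (Sym2.mem_mk_left _ _)
    by_cases hbb : s(a, b) ∈ bbE n (pathFun p hlen)
    · obtain ⟨k, hk⟩ := mem_bbE.mp hbb
      rcases Sym2.eq_iff.mp hk with ⟨h1, -⟩ | ⟨h1, -⟩
      · exact ⟨k.castSucc, mem_ribV.mpr ⟨haV, h1 ▸ Reachable.refl _⟩⟩
      · exact ⟨k.succ, mem_ribV.mpr ⟨haV, h1 ▸ Reachable.refl _⟩⟩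
    · have hadj : (ribG T n (pathFun p hlen)).Adj b a := by
        refine ⟨Ne.symm h.1, ?_⟩
        rw [Sym2.eq_swap]
        exact Finset.mem_coe.mpr (Finset.mem_sdiff.mpr ⟨Finset.mem_coe.mp h.2, hbb⟩)
      exact ⟨i, mem_ribV.mpr ⟨haV, (mem_ribV.mp hb).2.trans ⟨Walk.cons hadj Walk.nil⟩⟩⟩

lemma exists_rib (hpath : IsTreePath ((T.E : Finset (Sym2 (ZLat d))) : Set (Sym2 (ZLat d))) 0 x p)
    (hlen : p.length = n + 1) (h0 : (0 : ZLat d) ∈ T.V) {v : ZLat d} (hv : v ∈ T.V) :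
    ∃ i, v ∈ ribV T n (pathFun p hlen) i := by
  obtain ⟨r, hr, -⟩ := T.unique_path v hv 0 h0
  obtain ⟨w, -, -⟩ := isTreePath_to_walk T.loopless hr
  refine exists_rib_aux hpath hlen w ⟨0, mem_ribV.mpr ⟨h0, ?_⟩⟩
  rw [pathFun_zero hpath hlen]

lemma V_decomp (hpath : IsTreePath ((T.E : Finset (Sym2 (ZLat d))) : Set (Sym2 (ZLat d))) 0 x p)
    (hlen : p.length = n + 1) (h0 : (0 : ZLat d) ∈ T.V) :
    gluedV n (fun i => ribTree T n (pathFun p hlen) i) = T.V := by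
  ext v
  rw [mem_gluedV]
  constructor
  · rintro ⟨i, hi⟩
    exact Finset.filter_subset _ _ hi
  · intro hv
    exact exists_rib hpath hlen h0 hv

lemma E_decomp (hpath : IsTreePath ((T.E : Finset (Sym2 (ZLat d))) : Set (Sym2 (ZLat d))) 0 x p)
    (hlen : p.length = n + 1) (h0 : (0 : ZLat d) ∈ T.V) :
    gluedE n (pathFun p hlen) (fun i => ribTree T n (pathFun p hlen) i) = T.E := by
  ext e
  rw [mem_gluedE]
  constructor
  · rintro (hb | ⟨i, hi⟩)
    · exact bb_mem_T hpath hlen hb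
    · exact ribE_subset hi
  · intro he
    by_cases hbb : e ∈ bbE n (pathFun p hlen)
    · exact Or.inl hbb
    · right
      revert he hbb
      induction e using Sym2.ind with
      | _ a b =>
        intro he hbb
        have ha : a ∈ T.V := T.edge_sub _ he a (Sym2.mem_mk_left _ _)
        obtain ⟨i, hai⟩ := exists_rib hpath hlen h0 ha
        have hall := ribV_closed T n (pathFun p hlen) i s(a, b)
          (Finset.mem_coe.mpr (Finset.mem_sdiff.mpr ⟨he, hbb⟩))
          ⟨a, Sym2.mem_mk_left _ _, Finset.mem_coe.mpr hai⟩
        exact ⟨i, Finset.mem_filter.mpr ⟨Finset.mem_sdiff.mpr ⟨he, hbb⟩,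
          fun y hy => Finset.mem_coe.mp (hall y hy)⟩⟩

end Decomp


section Recover
open SimpleGraph

variable {d n : ℕ} {ω : Fin (n + 1) → ZLat d} {R : Fin (n + 1) → LTree d} {x : ZLat d}

variable (hdisj : ∀ i j, i ≠ j →
    Disjoint (((R i).V : Finset (ZLat d)) : Set (ZLat d)) (((R j).V : Finset (ZLat d)) : Set (ZLat d)))
  (hmem : ∀ i, ω i ∈ (R i).V)

include hdisj hmem

lemma ribE_not_bb {i : Fin (n + 1)} {e : Sym2 (ZLat d)} (he : e ∈ (R i).E) :
    e ∉ bbE n ω := by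
  intro hb
  obtain ⟨k, rfl⟩ := mem_bbE.mp hb
  have h1 : i = k.castSucc := rib_index_unique hdisj
    ((R i).edge_sub _ he _ (Sym2.mem_mk_left _ _)) (hmem k.castSucc)
  have h2 : i = k.succ := rib_index_unique hdisj
    ((R i).edge_sub _ he _ (Sym2.mem_mk_right _ _)) (hmem k.succ)
  exact (Fin.castSucc_lt_succ (i := k)).ne (h1 ▸ h2)

lemma ribE_sub_sdiff (i : Fin (n + 1)) :
    (R i).E ⊆ gluedE n ω R \ bbE n ω := by
  intro e he
  exact Finset.mem_sdiff.mpr ⟨mem_gluedE.mpr (Or.inr ⟨i, he⟩), ribE_not_bb hdisj hmem he⟩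

lemma gluedE_sdiff_bb {e : Sym2 (ZLat d)} :
    e ∈ gluedE n ω R \ bbE n ω ↔ ∃ i, e ∈ (R i).E := by
  constructor
  · intro he
    obtain ⟨hg, hnb⟩ := Finset.mem_sdiff.mp he
    rcases mem_gluedE.mp hg with hb | h
    · exact absurd hb hnb
    · exact h
  · rintro ⟨i, hi⟩
    exact ribE_sub_sdiff hdisj hmem i hi

lemma ribV_glued (i : Fin (n + 1)) :
    ribV (gluedTree hdisj hmem) n ω i = (R i).V := by
  ext v
  rw [mem_ribV]
  constructor
  · rintro ⟨hvV, hreach⟩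
    refine Finset.mem_coe.mp (reach_mem (W := (((R i).V : Finset (ZLat d)) : Set (ZLat d)))
      ?_ hreach (Finset.mem_coe.mpr (hmem i)))
    intro e he hex y hy
    obtain ⟨m, hm⟩ := (gluedE_sdiff_bb hdisj hmem).mp (Finset.mem_coe.mp he)
    obtain ⟨a, ha, haR⟩ := hex
    have hmi : m = i := rib_index_unique hdisj ((R m).edge_sub _ hm a ha)
      (Finset.mem_coe.mp haR)
    exact Finset.mem_coe.mpr (hmi ▸ (R m).edge_sub _ hm y hy)
  · intro hv
    refine ⟨mem_gluedV.mpr ⟨i, hv⟩, ?_⟩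
    refine (reach_in_rib i (hmem i) hv).mono (gr_mono ?_)
    intro e he
    exact Finset.mem_coe.mpr (ribE_sub_sdiff hdisj hmem i (Finset.mem_coe.mp he))

lemma ribE_glued (i : Fin (n + 1)) :
    ribE (gluedTree hdisj hmem) n ω i = (R i).E := by
  ext e
  rw [ribE, Finset.mem_filter]
  constructor
  · rintro ⟨hsd, hall⟩
    obtain ⟨m, hm⟩ := (gluedE_sdiff_bb hdisj hmem).mp hsd
    revert hm hall
    induction e using Sym2.ind with
    | _ a b =>
      intro hall hm
      have ha : a ∈ (R i).V := by
        have := hall a (Sym2.mem_mk_left _ _)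
        rwa [ribV_glued hdisj hmem] at this
      have hmi : m = i := rib_index_unique hdisj
        ((R m).edge_sub _ hm a (Sym2.mem_mk_left _ _)) ha
      exact hmi ▸ hm
  · intro he
    refine ⟨ribE_sub_sdiff hdisj hmem i he, ?_⟩
    intro y hy
    rw [ribV_glued hdisj hmem]
    exact (R i).edge_sub e he y hy

lemma ofFn_isTreePath (hω0 : ω 0 = 0) (hlast : ω (Fin.last n) = x) :
    IsTreePath ((gluedE n ω R : Finset (Sym2 (ZLat d))) : Set (Sym2 (ZLat d))) 0 x
      (List.ofFn ω) := by
  have hlen : (List.ofFn ω).length = n + 1 := List.length_ofFn (f := ω)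
  refine ⟨List.nodup_ofFn.mpr (omega_inj hdisj hmem), ?_, ?_, ?_⟩
  · rw [List.head?_eq_getElem?, List.getElem?_eq_getElem (by omega)]
    rw [List.getElem_ofFn, ← hω0]
    exact congrArg some (congrArg ω (Fin.ext rfl))
  · rw [List.getLast?_eq_getElem?, hlen]
    simp only [Nat.add_sub_cancel]
    rw [List.getElem?_eq_getElem (by omega), List.getElem_ofFn, ← hlast]
    exact congrArg some (congrArg ω (Fin.ext rfl))
  · simp only [List.Chain']
    rw [List.isChain_iff_getElem]
    intro k hk
    rw [hlen] at hk
    simp only [Nat.add_lt_add_iff_right] at hk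
    simp only [List.get_eq_getElem, List.getElem_ofFn]
    refine Finset.mem_coe.mpr (mem_gluedE.mpr (Or.inl (mem_bbE.mpr ⟨⟨k, hk⟩, ?_⟩)))
    congr 1 <;> exact congrArg ω (Fin.ext rfl)

lemma glued_path_unique (hω0 : ω 0 = 0) (hlast : ω (Fin.last n) = x)
    {r : List (ZLat d)}
    (hr : IsTreePath ((gluedE n ω R : Finset (Sym2 (ZLat d))) : Set (Sym2 (ZLat d))) 0 x r) :
    r = List.ofFn ω := by
  have h0V : (0 : ZLat d) ∈ (gluedTree hdisj hmem).V := by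
    rw [← hω0]
    exact mem_gluedV.mpr ⟨0, hmem 0⟩
  have hxV : x ∈ (gluedTree hdisj hmem).V := by
    rw [← hlast]
    exact mem_gluedV.mpr ⟨Fin.last n, hmem _⟩
  exact ((gluedTree hdisj hmem).unique_path 0 h0V x hxV).unique hr
    (ofFn_isTreePath hdisj hmem hω0 hlast)

lemma pathFun_ofFn (hlen : (List.ofFn ω).length = n + 1) (i : Fin (n + 1)) :
    pathFun (List.ofFn ω) hlen i = ω i := by
  rw [pathFun_val, List.getElem_ofFn]

end Recover


section Weight
open SimpleGraph

variable {d n : ℕ}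

lemma edgeWeight_mk (d L : ℕ) (a b : ZLat d) :
    edgeWeight d L s(a, b) = Dunif d L (a - b) := rfl

lemma bb_map_inj {ω : Fin (n + 1) → ZLat d} (hinj : Function.Injective ω) :
    Function.Injective (fun i : Fin n => s(ω i.castSucc, ω i.succ)) := by
  intro i j h
  rcases Sym2.eq_iff.mp h with ⟨h1, h2⟩ | ⟨h1, h2⟩
  · exact Fin.castSucc_inj.mp (hinj h1)
  · have e1 : (i.castSucc : ℕ) = (j.succ : ℕ) := congrArg Fin.val (hinj h1)
    have e2 : (i.succ : ℕ) = (j.castSucc : ℕ) := congrArg Fin.val (hinj h2)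
    rw [Fin.coe_castSucc, Fin.val_succ] at e1 e2
    omega

lemma bbE_card {ω : Fin (n + 1) → ZLat d} (hinj : Function.Injective ω) :
    (bbE n ω).card = n := by
  rw [bbE, Finset.card_image_of_injective _ (bb_map_inj hinj), Finset.card_univ,
    Fintype.card_fin]

lemma prod_bbE (L : ℕ) {ω : Fin (n + 1) → ZLat d} (hinj : Function.Injective ω) :
    ∏ e ∈ bbE n ω, edgeWeight d L e
      = ∏ i : Fin n, Dunif d L (ω i.succ - ω i.castSucc) := by
  rw [bbE, Finset.prod_image (fun i _ j _ h => bb_map_inj hinj h)]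
  refine Finset.prod_congr rfl fun i _ => ?_
  rw [edgeWeight_mk, ← Dunif_neg, neg_sub]

variable {T : LTree d} {x : ZLat d} {p : List (ZLat d)}

lemma ribE_pairwise_disjoint
    (hpath : IsTreePath ((T.E : Finset (Sym2 (ZLat d))) : Set (Sym2 (ZLat d))) 0 x p)
    (hlen : p.length = n + 1) (h0 : (0 : ZLat d) ∈ T.V) {i j : Fin (n + 1)} (hij : i ≠ j) :
    Disjoint (ribE T n (pathFun p hlen) i) (ribE T n (pathFun p hlen) j) := by
  rw [Finset.disjoint_left]
  intro e hei hej
  revert hei hej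
  induction e using Sym2.ind with
  | _ a b =>
    intro hei hej
    have hai : a ∈ ribV T n (pathFun p hlen) i :=
      (Finset.mem_filter.mp hei).2 a (Sym2.mem_mk_left _ _)
    have haj : a ∈ ribV T n (pathFun p hlen) j :=
      (Finset.mem_filter.mp hej).2 a (Sym2.mem_mk_left _ _)
    exact Set.disjoint_left.mp (ribV_disj hpath hlen h0 i j hij)
      (Finset.mem_coe.mpr hai) (Finset.mem_coe.mpr haj)

lemma bb_disjoint_ribs
    (hpath : IsTreePath ((T.E : Finset (Sym2 (ZLat d))) : Set (Sym2 (ZLat d))) 0 x p)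
    (hlen : p.length = n + 1) :
    Disjoint (bbE n (pathFun p hlen))
      (Finset.univ.biUnion fun i => ribE T n (pathFun p hlen) i) := by
  rw [Finset.disjoint_right]
  intro e he
  obtain ⟨i, -, hi⟩ := Finset.mem_biUnion.mp he
  exact (Finset.mem_sdiff.mp (Finset.mem_filter.mp hi).1).2

lemma weight_decomp (L : ℕ) (z : ℝ)
    (hpath : IsTreePath ((T.E : Finset (Sym2 (ZLat d))) : Set (Sym2 (ZLat d))) 0 x p)
    (hlen : p.length = n + 1) (h0 : (0 : ZLat d) ∈ T.V) :
    W L z T = Wwalk d L z n (pathFun p hlen)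
      * ∏ i, W L z (ribTree T n (pathFun p hlen) i) := by
  set ω := pathFun p hlen with hω
  have hE : T.E = bbE n ω ∪ Finset.univ.biUnion (fun i => ribE T n ω i) :=
    (E_decomp hpath hlen h0).symm
  have hdisjE := bb_disjoint_ribs hpath hlen
  have hpair : ∀ i ∈ (Finset.univ : Finset (Fin (n + 1))), ∀ j ∈ Finset.univ, i ≠ j →
      Disjoint (ribE T n ω i) (ribE T n ω j) :=
    fun i _ j _ hij => ribE_pairwise_disjoint hpath hlen h0 hij
  have hcard : T.E.card = n + ∑ i, (ribE T n ω i).card := by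
    rw [hE, Finset.card_union_of_disjoint hdisjE, bbE_card (pathFun_inj hpath hlen),
      Finset.card_biUnion hpair]
  have hprod : ∏ e ∈ T.E, edgeWeight d L e
      = (∏ i : Fin n, Dunif d L (ω i.succ - ω i.castSucc))
        * ∏ i : Fin (n + 1), ∏ e ∈ ribE T n ω i, edgeWeight d L e := by
    rw [hE, Finset.prod_union hdisjE, prod_bbE L (pathFun_inj hpath hlen),
      Finset.prod_biUnion (fun i hi j hj hij => hpair i hi j hj hij)]
  have hrib : ∀ i, W L z (ribTree T n ω i)
      = z ^ (ribE T n ω i).card * ∏ e ∈ ribE T n ω i, edgeWeight d L e := fun i => rfl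
  rw [W, Wwalk, hcard, hprod]
  simp only [hrib]
  rw [Finset.prod_mul_distrib, Finset.prod_pow_eq_pow_sum, pow_add]
  ring

lemma ribTree_TLset {L : ℕ} (hT : T ∈ TLset L 0)
    (hpath : IsTreePath ((T.E : Finset (Sym2 (ZLat d))) : Set (Sym2 (ZLat d))) 0 x p)
    (hlen : p.length = n + 1) (i : Fin (n + 1)) :
    ribTree T n (pathFun p hlen) i ∈ TLset L (pathFun p hlen i) :=
  ⟨pathFun_mem_ribV hpath hlen hT.1 i, fun a b hab j => hT.2 a b (ribE_subset hab) j⟩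

lemma steps_bound {L : ℕ} (hT : T ∈ TLset L 0)
    (hpath : IsTreePath ((T.E : Finset (Sym2 (ZLat d))) : Set (Sym2 (ZLat d))) 0 x p)
    (hlen : p.length = n + 1) (i : Fin n) (j : Fin d) :
    ((pathFun p hlen i.succ - pathFun p hlen i.castSucc) j).natAbs ≤ L := by
  have he : s(pathFun p hlen i.castSucc, pathFun p hlen i.succ) ∈ T.E :=
    bb_mem_T hpath hlen (mem_bbE.mpr ⟨i, rfl⟩)
  have he2 : s(pathFun p hlen i.succ, pathFun p hlen i.castSucc) ∈ T.E := by
    rwa [Sym2.eq_swap]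
  exact hT.2 _ _ he2 j

variable {ω : Fin (n + 1) → ZLat d} {R : Fin (n + 1) → LTree d}

lemma glued_TLset {L : ℕ}
    (hdisj : ∀ i j, i ≠ j → Disjoint (((R i).V : Finset (ZLat d)) : Set (ZLat d))
      (((R j).V : Finset (ZLat d)) : Set (ZLat d)))
    (hmem : ∀ i, ω i ∈ (R i).V) (hω0 : ω 0 = 0)
    (hR : ∀ i, R i ∈ TLset L (ω i))
    (hstep : ∀ i : Fin n, ∀ j, ((ω i.succ - ω i.castSucc) j).natAbs ≤ L) :
    gluedTree hdisj hmem ∈ TLset L 0 := by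
  refine ⟨by rw [← hω0]; exact mem_gluedV.mpr ⟨0, hmem 0⟩, ?_⟩
  intro a b hab j
  rcases mem_gluedE.mp hab with hb | ⟨i, hi⟩
  · obtain ⟨k, hk⟩ := mem_bbE.mp hb
    rcases Sym2.eq_iff.mp hk with ⟨h1, h2⟩ | ⟨h1, h2⟩
    · subst h1; subst h2
      have heq : ω k.castSucc j - ω k.succ j = -((ω k.succ - ω k.castSucc) j) := by
        simp only [Pi.sub_apply]
        ring
      rw [heq, Int.natAbs_neg]
      exact hstep k j
    · subst h1; subst h2
      exact hstep k j
  · exact (hR i).2 a b hi j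

lemma glued_gen
    (hdisj : ∀ i j, i ≠ j → Disjoint (((R i).V : Finset (ZLat d)) : Set (ZLat d))
      (((R j).V : Finset (ZLat d)) : Set (ZLat d)))
    (hmem : ∀ i, ω i ∈ (R i).V) (hω0 : ω 0 = 0) (hlast : ω (Fin.last n) = x) :
    x ∈ gen (gluedTree hdisj hmem) n :=
  ⟨hlast ▸ mem_gluedV.mpr ⟨Fin.last n, hmem _⟩,
    List.ofFn ω, ofFn_isTreePath hdisj hmem hω0 hlast, List.length_ofFn (f := ω)⟩

end Weight


section Final
open SimpleGraph

variable {d : ℕ}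

lemma Dunif_nonneg (d L : ℕ) (x : ZLat d) : 0 ≤ Dunif d L x := by
  rw [Dunif]
  split
  · positivity
  · exact le_refl 0

lemma edgeWeight_nonneg (d L : ℕ) (e : Sym2 (ZLat d)) : 0 ≤ edgeWeight d L e := by
  induction e using Sym2.ind with
  | _ a b => rw [edgeWeight_mk]; exact Dunif_nonneg d L _

lemma W_nonneg (L : ℕ) {z : ℝ} (hz : 0 < z) (T : LTree d) : 0 ≤ W L z T :=
  mul_nonneg (pow_nonneg hz.le _) (Finset.prod_nonneg fun e _ => edgeWeight_nonneg d L e)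

lemma Wwalk_nonneg {L n : ℕ} {z : ℝ} (hz : 0 < z) (ω : Fin (n + 1) → ZLat d) :
    0 ≤ Wwalk d L z n ω :=
  mul_nonneg (pow_nonneg hz.le _) (Finset.prod_nonneg fun i _ => Dunif_nonneg d L _)

variable (d)

/-- The decomposition map: tree to (backbone, ribs). -/
def fwdMap (L n : ℕ) (x : ZLat d) (T : {T : LTree d // T ∈ TLset L 0 ∧ x ∈ gen T n}) :
    {pr : (Fin (n + 1) → ZLat d) × (Fin (n + 1) → LTree d) //
      pr.1 0 = 0 ∧ pr.1 (Fin.last n) = x ∧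
      (∀ i : Fin n, ∀ j, ((pr.1 i.succ - pr.1 i.castSucc) j).natAbs ≤ L) ∧
      (∀ i, pr.2 i ∈ TLset L (pr.1 i)) ∧
      (∀ i j, i ≠ j →
        Disjoint (((pr.2 i).V : Finset (ZLat d)) : Set (ZLat d))
          (((pr.2 j).V : Finset (ZLat d)) : Set (ZLat d)))} :=
  ⟨(pathFun T.2.2.2.choose T.2.2.2.choose_spec.2,
    fun i => ribTree T.1 n (pathFun T.2.2.2.choose T.2.2.2.choose_spec.2) i),
    pathFun_zero T.2.2.2.choose_spec.1 T.2.2.2.choose_spec.2,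
    pathFun_last T.2.2.2.choose_spec.1 T.2.2.2.choose_spec.2,
    fun i j => steps_bound T.2.1 T.2.2.2.choose_spec.1 T.2.2.2.choose_spec.2 i j,
    fun i => ribTree_TLset T.2.1 T.2.2.2.choose_spec.1 T.2.2.2.choose_spec.2 i,
    fun i j hij => ribV_disj T.2.2.2.choose_spec.1 T.2.2.2.choose_spec.2 T.2.1.1 i j hij⟩

/-- The gluing map: (backbone, ribs) to tree. -/
def bwdMap (L n : ℕ) (x : ZLat d)
    (pr : {pr : (Fin (n + 1) → ZLat d) × (Fin (n + 1) → LTree d) //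
      pr.1 0 = 0 ∧ pr.1 (Fin.last n) = x ∧
      (∀ i : Fin n, ∀ j, ((pr.1 i.succ - pr.1 i.castSucc) j).natAbs ≤ L) ∧
      (∀ i, pr.2 i ∈ TLset L (pr.1 i)) ∧
      (∀ i j, i ≠ j →
        Disjoint (((pr.2 i).V : Finset (ZLat d)) : Set (ZLat d))
          (((pr.2 j).V : Finset (ZLat d)) : Set (ZLat d)))}) :
    {T : LTree d // T ∈ TLset L 0 ∧ x ∈ gen T n} :=
  ⟨gluedTree (fun i j hij => pr.2.2.2.2.2 i j hij) (fun i => (pr.2.2.2.2.1 i).1),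
    glued_TLset (fun i j hij => pr.2.2.2.2.2 i j hij) (fun i => (pr.2.2.2.2.1 i).1)
      pr.2.1 pr.2.2.2.2.1 pr.2.2.2.1,
    glued_gen (fun i j hij => pr.2.2.2.2.2 i j hij) (fun i => (pr.2.2.2.2.1 i).1)
      pr.2.1 pr.2.2.1⟩

/-- The backbone/ribs decomposition as an equivalence. -/
def decompEquiv (L n : ℕ) (x : ZLat d) :
    {T : LTree d // T ∈ TLset L 0 ∧ x ∈ gen T n} ≃
    {pr : (Fin (n + 1) → ZLat d) × (Fin (n + 1) → LTree d) //
      pr.1 0 = 0 ∧ pr.1 (Fin.last n) = x ∧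
      (∀ i : Fin n, ∀ j, ((pr.1 i.succ - pr.1 i.castSucc) j).natAbs ≤ L) ∧
      (∀ i, pr.2 i ∈ TLset L (pr.1 i)) ∧
      (∀ i j, i ≠ j →
        Disjoint (((pr.2 i).V : Finset (ZLat d)) : Set (ZLat d))
          (((pr.2 j).V : Finset (ZLat d)) : Set (ZLat d)))} where
  toFun := fwdMap d L n x
  invFun := bwdMap d L n x
  left_inv := by
    rintro ⟨T, hT, hgen⟩
    apply Subtype.ext
    apply LTree.ext'
    · exact V_decomp hgen.2.choose_spec.1 hgen.2.choose_spec.2 hT.1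
    · exact E_decomp hgen.2.choose_spec.1 hgen.2.choose_spec.2 hT.1
  right_inv := by
    rintro ⟨⟨ω, R⟩, h1, h2, h3, h4, h5⟩
    have hdisj : ∀ i j, i ≠ j →
        Disjoint (((R i).V : Finset (ZLat d)) : Set (ZLat d))
          (((R j).V : Finset (ZLat d)) : Set (ZLat d)) := h5
    have hmem : ∀ i, ω i ∈ (R i).V := fun i => (h4 i).1
    apply Subtype.ext
    set S := bwdMap d L n x ⟨(ω, R), h1, h2, h3, h4, h5⟩ with hSdef
    have hq : S.2.2.2.choose = List.ofFn ω :=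
      glued_path_unique hdisj hmem h1 h2 S.2.2.2.choose_spec.1
    have hωeq : ∀ i, pathFun S.2.2.2.choose S.2.2.2.choose_spec.2 i = ω i := by
      intro i
      rw [pathFun_val]
      simp only [hq, List.getElem_ofFn]
    have hfun : pathFun S.2.2.2.choose S.2.2.2.choose_spec.2 = ω := funext hωeq
    refine Prod.ext ?_ ?_
    · exact hfun
    · funext i
      show ribTree S.1 n (pathFun S.2.2.2.choose S.2.2.2.choose_spec.2) i = R i
      rw [hfun]
      apply LTree.ext'
      · exact ribV_glued hdisj hmem i
      · exact ribE_glued hdisj hmem i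

lemma fwd_weight (L n : ℕ) (x : ZLat d) (z : ℝ)
    (T : {T : LTree d // T ∈ TLset L 0 ∧ x ∈ gen T n}) :
    W L z T.1 = Wwalk d L z n ((fwdMap d L n x T).1.1)
      * ∏ i, W L z ((fwdMap d L n x T).1.2 i) :=
  weight_decomp L z T.2.2.2.choose_spec.1 T.2.2.2.choose_spec.2 T.2.1.1

/-- Regrouping the pair subtype as a sigma type. -/
def sigmaEquiv (L n : ℕ) (x : ZLat d) :
    {pr : (Fin (n + 1) → ZLat d) × (Fin (n + 1) → LTree d) //
      pr.1 0 = 0 ∧ pr.1 (Fin.last n) = x ∧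
      (∀ i : Fin n, ∀ j, ((pr.1 i.succ - pr.1 i.castSucc) j).natAbs ≤ L) ∧
      (∀ i, pr.2 i ∈ TLset L (pr.1 i)) ∧
      (∀ i j, i ≠ j →
        Disjoint (((pr.2 i).V : Finset (ZLat d)) : Set (ZLat d))
          (((pr.2 j).V : Finset (ZLat d)) : Set (ZLat d)))} ≃
      (Σ ω : {ω : Fin (n + 1) → ZLat d // ω 0 = 0 ∧ ω (Fin.last n) = x ∧
          ∀ i : Fin n, ∀ j, ((ω i.succ - ω i.castSucc) j).natAbs ≤ L},
        {R : Fin (n + 1) → LTree d //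
          (∀ i, R i ∈ TLset L (ω.1 i)) ∧
          ∀ i j, i ≠ j →
            Disjoint ((R i).V : Set (ZLat d)) ((R j).V : Set (ZLat d))}) where
  toFun := fun pr => ⟨⟨pr.1.1, pr.2.1, pr.2.2.1, pr.2.2.2.1⟩,
    ⟨pr.1.2, pr.2.2.2.2.1, pr.2.2.2.2.2⟩⟩
  invFun := fun σ => ⟨(σ.1.1, σ.2.1),
    σ.1.2.1, σ.1.2.2.1, σ.1.2.2.2, σ.2.2.1, σ.2.2.2⟩
  left_inv := fun _ => rfl
  right_inv := fun _ => rfl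

end Final

end Aux

-- CORE_END

/-- the backbone/ribs decomposition, eq. (2point0) and Remark `ribs`:
for every `z > 0`, `n` and `x`, the weighted sum of lattice trees containing `x` at
generation `n` factorises over backbone walks and tuples of mutually avoiding ribs;
moreover the decomposition map is a bijection preserving weights. -/
theorem statement15 {d : ℕ} (hd : 1 ≤ d) (L : ℕ) (hL : 1 ≤ L)
    (z : ℝ) (hz : 0 < z) (n : ℕ) (x : ZLat d) :
    ((∑' T : {T : LTree d // T ∈ TLset L 0 ∧ x ∈ gen T n},
        ENNReal.ofReal (W L z T.1))
      = ∑' ω : {ω : Fin (n + 1) → ZLat d // ω 0 = 0 ∧ ω (Fin.last n) = x ∧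
            ∀ i : Fin n, ∀ j, ((ω i.succ - ω i.castSucc) j).natAbs ≤ L},
          ENNReal.ofReal (Wwalk d L z n ω.1) *
            ∑' R : {R : Fin (n + 1) → LTree d //
                (∀ i, R i ∈ TLset L (ω.1 i)) ∧
                ∀ i j, i ≠ j →
                  Disjoint ((R i).V : Set (ZLat d)) ((R j).V : Set (ZLat d))},
              ENNReal.ofReal (∏ i, W L z (R.1 i))) ∧
    ∃ Φ : {T : LTree d // T ∈ TLset L 0 ∧ x ∈ gen T n} ≃
        {pr : (Fin (n + 1) → ZLat d) × (Fin (n + 1) → LTree d) //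
          pr.1 0 = 0 ∧ pr.1 (Fin.last n) = x ∧
          (∀ i : Fin n, ∀ j, ((pr.1 i.succ - pr.1 i.castSucc) j).natAbs ≤ L) ∧
          (∀ i, pr.2 i ∈ TLset L (pr.1 i)) ∧
          (∀ i j, i ≠ j →
            Disjoint ((pr.2 i).V : Set (ZLat d)) ((pr.2 j).V : Set (ZLat d)))},
      ∀ T : {T : LTree d // T ∈ TLset L 0 ∧ x ∈ gen T n},
        -- the walk component is the unique backbone path `w(n,x)` of `T`
        (∃ p : List (ZLat d),
          IsTreePath ((T.1.E : Set (Sym2 (ZLat d)))) 0 x p ∧ p.length = n + 1 ∧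
          ∀ i : Fin (n + 1), p[(i : ℕ)]? = some ((Φ T).1.1 i)) ∧
        -- the ribs partition the vertex set of `T`
        (T.1.V : Set (ZLat d)) = (⋃ i, (((Φ T).1.2 i).V : Set (ZLat d))) ∧
        -- the edges of `T` are the backbone edges together with the rib edges
        (T.1.E : Set (Sym2 (ZLat d)))
          = {e | ∃ i : Fin n, e = s((Φ T).1.1 i.castSucc, (Φ T).1.1 i.succ)} ∪
            (⋃ i, (((Φ T).1.2 i).E : Set (Sym2 (ZLat d)))) ∧
        -- the weight factorises along the decomposition
        W L z T.1 = Wwalk d L z n (Φ T).1.1 * ∏ i, W L z ((Φ T).1.2 i) := by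
  classical
  set Φ := decompEquiv d L n x with hΦdef
  set f' : {pr : (Fin (n + 1) → ZLat d) × (Fin (n + 1) → LTree d) //
      pr.1 0 = 0 ∧ pr.1 (Fin.last n) = x ∧
      (∀ i : Fin n, ∀ j, ((pr.1 i.succ - pr.1 i.castSucc) j).natAbs ≤ L) ∧
      (∀ i, pr.2 i ∈ TLset L (pr.1 i)) ∧
      (∀ i j, i ≠ j →
        Disjoint (((pr.2 i).V : Finset (ZLat d)) : Set (ZLat d))
          (((pr.2 j).V : Finset (ZLat d)) : Set (ZLat d)))} → ℝ≥0∞ :=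
    fun pr => ENNReal.ofReal (Wwalk d L z n pr.1.1)
      * ENNReal.ofReal (∏ i, W L z (pr.1.2 i)) with hf'def
  have hweight : ∀ T : {T : LTree d // T ∈ TLset L 0 ∧ x ∈ gen T n},
      ENNReal.ofReal (W L z T.1) = f' (Φ T) := by
    intro T
    rw [hf'def]
    show ENNReal.ofReal (W L z T.1)
      = ENNReal.ofReal (Wwalk d L z n ((Φ T).1.1))
        * ENNReal.ofReal (∏ i, W L z ((Φ T).1.2 i))
    rw [show Φ T = fwdMap d L n x T from rfl, fwd_weight d L n x z T,
      ENNReal.ofReal_mul (Wwalk_nonneg hz _)]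
  have he2 := sigmaEquiv d L n x
  constructor
  · refine (tsum_congr hweight).trans ?_
    refine (Φ.tsum_eq f').trans ?_
    refine (((sigmaEquiv d L n x).symm.tsum_eq f').symm).trans ?_
    refine (ENNReal.tsum_sigma' (fun σ => f' ((sigmaEquiv d L n x).symm σ))).trans ?_
    refine tsum_congr fun ω' => ?_
    have h3 : ∀ R' : {R : Fin (n + 1) → LTree d //
        (∀ i, R i ∈ TLset L (ω'.1 i)) ∧ ∀ i j, i ≠ j →
          Disjoint ((R i).V : Set (ZLat d)) ((R j).V : Set (ZLat d))},
        f' ((sigmaEquiv d L n x).symm ⟨ω', R'⟩)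
          = ENNReal.ofReal (Wwalk d L z n ω'.1) * ENNReal.ofReal (∏ i, W L z (R'.1 i)) :=
      fun R' => by rw [hf'def]; rfl
    exact (tsum_congr h3).trans ENNReal.tsum_mul_left
  · refine ⟨Φ, fun T => ⟨⟨T.2.2.2.choose, T.2.2.2.choose_spec.1,
      T.2.2.2.choose_spec.2, ?_⟩, ?_, ?_, ?_⟩⟩
    · intro i
      rw [List.getElem?_eq_getElem (by rw [T.2.2.2.choose_spec.2]; exact i.isLt)]
      rfl
    · have hV := V_decomp T.2.2.2.choose_spec.1 T.2.2.2.choose_spec.2 T.2.1.1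
      rw [← hV, gluedV, Finset.coe_biUnion]
      simp only [Finset.coe_univ, Set.mem_univ, Set.iUnion_true]
      rfl
    · have hEd := E_decomp T.2.2.2.choose_spec.1 T.2.2.2.choose_spec.2 T.2.1.1
      rw [← hEd, gluedE, Finset.coe_union, Finset.coe_biUnion]
      congr 1
      · ext e
        simp only [Finset.mem_coe, Set.mem_setOf_eq, mem_bbE]
        rfl
      · simp only [Finset.coe_univ, Set.mem_univ, Set.iUnion_true]
        rfl
    · exact fwd_weight d L n x z T

end LatticeTreePaper
end
end
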